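/- Contraction is height-preserving admissible in the nested sequent calculus for GL: if Γ{A, A} has a cut-free derivation of height h, then Γ{A} has a cut-free derivation of height at most h. -/
import Mathlib


/-- Formulas of GL in negation normal form. -/
inductive Formula : Type where
  | pos : ℕ → Formula
  | neg : ℕ → Formula
  | and : Formula → Formula → Formula
  | or  : Formula → Formula → Formula
  | box : Formula → Formula
  | dia : Formula → Formula
deriving DecidableEq

/-- Negation `A⊥` of a formula, via De Morgan duality. -/
def Formula.negate : Formula → Formula
  | .pos a => .neg a
  | .neg a => .pos a
  | .and A B => .or A.negate B.negate
  | .or A B => .and A.negate B.negate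
  | .box A => .dia A.negate
  | .dia A => .box A.negate

/-- An element of a nested sequent: a formula or a nested (bracketed) sequent. -/
inductive SeqElem : Type where
  | fml : Formula → SeqElem
  | nest : List SeqElem → SeqElem

/-- A nested sequent. -/
abbrev Sequent := List SeqElem

/-- Unary contexts: a nested sequent with a single hole. -/
inductive Ctx : Type where
  | hole : Sequent → Ctx
  | nest : Sequent → Ctx → Ctx

/-- Fill the hole of a context with a sequent. -/
def Ctx.fill : Ctx → Sequent → Sequent
  | .hole Δ, Γ => Δ ++ Γ
  | .nest Δ c, Γ => .nest (c.fill Γ) :: Δ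

/-- Depth of a context: number of brackets surrounding the hole. -/
def Ctx.depth : Ctx → ℕ
  | .hole _ => 0
  | .nest _ c => c.depth + 1

/-- Equivalence of nested sequents up to (deep) exchange. -/
inductive SeqEquiv : Sequent → Sequent → Prop where
  | nil : SeqEquiv [] []
  | cons {e : SeqElem} {Γ Δ : Sequent} : SeqEquiv Γ Δ → SeqEquiv (e :: Γ) (e :: Δ)
  | consNest {Γ' Δ' Γ Δ : Sequent} :
      SeqEquiv Γ' Δ' → SeqEquiv Γ Δ → SeqEquiv (.nest Γ' :: Γ) (.nest Δ' :: Δ)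
  | swap (a b : SeqElem) (Γ : Sequent) : SeqEquiv (a :: b :: Γ) (b :: a :: Γ)
  | trans {Γ Δ Θ : Sequent} : SeqEquiv Γ Δ → SeqEquiv Δ Θ → SeqEquiv Γ Θ

/-- `DerivH n Γ`: `Γ` has a cut-free derivation of height at most `n`. -/
inductive DerivH : ℕ → Sequent → Prop where
  | id (n : ℕ) (c : Ctx) (a : ℕ) :
      DerivH n (c.fill [.fml (.pos a), .fml (.neg a)])
  | and {n : ℕ} {c : Ctx} {A B : Formula} :
      DerivH n (c.fill [.fml A]) → DerivH n (c.fill [.fml B]) →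
      DerivH (n + 1) (c.fill [.fml (.and A B)])
  | or {n : ℕ} {c : Ctx} {A B : Formula} :
      DerivH n (c.fill [.fml A, .fml B]) →
      DerivH (n + 1) (c.fill [.fml (.or A B)])
  | box {n : ℕ} {c : Ctx} {A : Formula} :
      DerivH n (c.fill [.nest [.fml (.dia A.negate), .fml A]]) →
      DerivH (n + 1) (c.fill [.fml (.box A)])
  | dia {n : ℕ} (c d : Ctx) {A : Formula} :
      0 < d.depth →
      DerivH n (c.fill (d.fill [.fml A] ++ [.fml (.dia A)])) →
      DerivH (n + 1) (c.fill (d.fill [] ++ [.fml (.dia A)]))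
  | exch {n : ℕ} {Γ Δ : Sequent} : SeqEquiv Γ Δ → DerivH n Γ → DerivH n Δ
  | up {n : ℕ} {Γ : Sequent} : DerivH n Γ → DerivH (n + 1) Γ

/-- Derivability where cut is permitted on formulas satisfying `P`. -/
inductive DerivWith (P : Formula → Prop) : Sequent → Prop where
  | id (c : Ctx) (a : ℕ) :
      DerivWith P (c.fill [.fml (.pos a), .fml (.neg a)])
  | and {c : Ctx} {A B : Formula} :
      DerivWith P (c.fill [.fml A]) → DerivWith P (c.fill [.fml B]) →
      DerivWith P (c.fill [.fml (.and A B)])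
  | or {c : Ctx} {A B : Formula} :
      DerivWith P (c.fill [.fml A, .fml B]) →
      DerivWith P (c.fill [.fml (.or A B)])
  | box {c : Ctx} {A : Formula} :
      DerivWith P (c.fill [.nest [.fml (.dia A.negate), .fml A]]) →
      DerivWith P (c.fill [.fml (.box A)])
  | dia (c d : Ctx) {A : Formula} :
      0 < d.depth →
      DerivWith P (c.fill (d.fill [.fml A] ++ [.fml (.dia A)])) →
      DerivWith P (c.fill (d.fill [] ++ [.fml (.dia A)]))
  | cut {c : Ctx} {A : Formula} : P A →
      DerivWith P (c.fill [.fml A]) → DerivWith P (c.fill [.fml A.negate]) →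
      DerivWith P (c.fill [])
  | exch {Γ Δ : Sequent} : SeqEquiv Γ Δ → DerivWith P Γ → DerivWith P Δ

/-- Cut-free derivability. -/
abbrev Deriv : Sequent → Prop := DerivWith (fun _ => False)

/-! ### Basic API for SeqEquiv -/

namespace SeqEquiv

theorem refl : ∀ Γ : Sequent, SeqEquiv Γ Γ
  | [] => .nil
  | _ :: Γ => .cons (refl Γ)

theorem symm {Γ Δ : Sequent} (h : SeqEquiv Γ Δ) : SeqEquiv Δ Γ := by
  induction h with
  | nil => exact .nil
  | cons _ ih => exact .cons ih
  | consNest _ _ ih1 ih2 => exact .consNest ih1 ih2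
  | swap a b Γ => exact .swap b a Γ
  | trans _ _ ih1 ih2 => exact .trans ih2 ih1

theorem appendL (σ : Sequent) {Γ Δ : Sequent} (h : SeqEquiv Γ Δ) :
    SeqEquiv (σ ++ Γ) (σ ++ Δ) := by
  induction σ with
  | nil => exact h
  | cons e σ ih => exact .cons ih

theorem appendR {Γ Δ : Sequent} (h : SeqEquiv Γ Δ) (σ : Sequent) :
    SeqEquiv (Γ ++ σ) (Δ ++ σ) := by
  induction h with
  | nil => exact refl σ
  | cons _ ih => exact .cons ih
  | consNest h1 _ _ ih2 => exact .consNest h1 ih2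
  | swap a b Γ => exact .swap a b (Γ ++ σ)
  | trans _ _ ih1 ih2 => exact .trans ih1 ih2

/-- move a middle element to the front -/
theorem middle (σ : Sequent) (e : SeqElem) (Γ : Sequent) :
    SeqEquiv (σ ++ e :: Γ) (e :: (σ ++ Γ)) := by
  induction σ with
  | nil => exact refl _
  | cons f σ ih => exact .trans (.cons ih) (.swap f e _)

theorem middle' (σ : Sequent) (e : SeqElem) (Γ : Sequent) :
    SeqEquiv (e :: (σ ++ Γ)) (σ ++ e :: Γ) := (middle σ e Γ).symm

theorem append_comm (σ τ : Sequent) : SeqEquiv (σ ++ τ) (τ ++ σ) := by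
  induction σ with
  | nil => simpa using refl τ
  | cons e σ ih => exact .trans (.cons ih) (middle' τ e σ)

end SeqEquiv

theorem DerivH.eqv {n : ℕ} {Γ Δ : Sequent} (d : DerivH n Γ) (h : SeqEquiv Γ Δ) :
    DerivH n Δ := .exch h d

theorem DerivH.eqv' {n : ℕ} {Γ Δ : Sequent} (d : DerivH n Γ) (h : SeqEquiv Δ Γ) :
    DerivH n Δ := .exch h.symm d

/-! ### Context operations -/

namespace Ctx

/-- extend the hole list of a context (inserting `σ` just before the hole) -/
def ext : Ctx → Sequent → Ctx
  | .hole Δ, σ => .hole (Δ ++ σ)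
  | .nest Δ c, σ => .nest Δ (c.ext σ)

@[simp] theorem ext_fill (c : Ctx) (σ t : Sequent) :
    (c.ext σ).fill t = c.fill (σ ++ t) := by
  induction c with
  | hole Δ => simp [ext, fill]
  | nest Δ c ih => simp [ext, fill, ih]

@[simp] theorem ext_depth (c : Ctx) (σ : Sequent) : (c.ext σ).depth = c.depth := by
  induction c with
  | hole Δ => rfl
  | nest Δ c ih => simp [ext, depth, ih]

/-- add elements to the outermost list of a context -/
def outer : Ctx → Sequent → Ctx
  | .hole Δ, σ => .hole (σ ++ Δ)
  | .nest Δ c, σ => .nest (σ ++ Δ) c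

theorem outer_fill (c : Ctx) (σ t : Sequent) :
    SeqEquiv ((c.outer σ).fill t) (σ ++ c.fill t) := by
  cases c with
  | hole Δ => simp only [outer, fill, List.append_assoc]; exact SeqEquiv.refl _
  | nest Δ c => exact SeqEquiv.middle' σ _ Δ

@[simp] theorem outer_depth (c : Ctx) (σ : Sequent) : (c.outer σ).depth = c.depth := by
  cases c <;> rfl

/-- composition of contexts -/
def comp : Ctx → Ctx → Ctx
  | .hole Δ, c2 => c2.outer Δ
  | .nest Δ c, c2 => .nest Δ (c.comp c2)

theorem comp_fill (c1 c2 : Ctx) (t : Sequent) :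
    SeqEquiv ((c1.comp c2).fill t) (c1.fill (c2.fill t)) := by
  induction c1 with
  | hole Δ => exact outer_fill c2 Δ t
  | nest Δ c ih => exact SeqEquiv.consNest ih (SeqEquiv.refl Δ)

@[simp] theorem comp_depth (c1 c2 : Ctx) : (c1.comp c2).depth = c1.depth + c2.depth := by
  induction c1 with
  | hole Δ => simp [comp, depth]
  | nest Δ c ih => simp [comp, depth, ih]; omega

theorem fill_cong (c : Ctx) {t t' : Sequent} (h : SeqEquiv t t') :
    SeqEquiv (c.fill t) (c.fill t') := by
  induction c with
  | hole Δ => exact SeqEquiv.appendL Δ h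
  | nest Δ c ih => exact SeqEquiv.consNest ih (SeqEquiv.refl Δ)

end Ctx
/-! ### Top-level insertion, element equivalence -/

/-- `InsTop e Γ Δ`: `Δ` is `Γ` with `e` inserted at some (top-level) position. -/
inductive InsTop (e : SeqElem) : Sequent → Sequent → Prop
  | head (Γ : Sequent) : InsTop e Γ (e :: Γ)
  | cons (f : SeqElem) {Γ Δ : Sequent} : InsTop e Γ Δ → InsTop e (f :: Γ) (f :: Δ)

namespace InsTop

theorem mid (e : SeqElem) (σ τ : Sequent) : InsTop e (σ ++ τ) (σ ++ e :: τ) := by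
  induction σ with
  | nil => exact head τ
  | cons f σ ih => exact cons f ih

theorem appendR {e : SeqElem} {Γ Δ : Sequent} (h : InsTop e Γ Δ) (τ : Sequent) :
    InsTop e (Γ ++ τ) (Δ ++ τ) := by
  induction h with
  | head Γ => exact head _
  | cons f _ ih => exact cons f ih

theorem split {e : SeqElem} {Γ' σ τ : Sequent} (h : InsTop e Γ' (σ ++ τ)) :
    (∃ σ', InsTop e σ' σ ∧ Γ' = σ' ++ τ) ∨ (∃ τ', InsTop e τ' τ ∧ Γ' = σ ++ τ') := by
  induction σ generalizing Γ' with
  | nil => exact .inr ⟨Γ', h, rfl⟩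
  | cons f σ ih =>
    cases h with
    | head => exact .inl ⟨σ, head σ, rfl⟩
    | cons _ h' =>
      rcases ih h' with ⟨σ', h1, rfl⟩ | ⟨τ', h1, rfl⟩
      · exact .inl ⟨f :: σ', cons f h1, rfl⟩
      · exact .inr ⟨τ', h1, rfl⟩

theorem toEquiv {e : SeqElem} {Γ Δ : Sequent} (h : InsTop e Γ Δ) :
    SeqEquiv Δ (e :: Γ) := by
  induction h with
  | head Γ => exact SeqEquiv.refl _
  | cons f _ ih => exact .trans (.cons ih) (.swap f e _)

end InsTop

/-- Equivalence of single elements. -/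
def EEq : SeqElem → SeqElem → Prop
  | .fml A, .fml B => A = B
  | .nest N, .nest M => SeqEquiv N M
  | _, _ => False

namespace EEq

@[simp] theorem refl : ∀ e : SeqElem, EEq e e
  | .fml _ => rfl
  | .nest N => SeqEquiv.refl N

theorem symm : ∀ {e e' : SeqElem}, EEq e e' → EEq e' e
  | .fml _, .fml _, h => Eq.symm h
  | .nest _, .nest _, h => SeqEquiv.symm h
  | .fml _, .nest _, h => h.elim
  | .nest _, .fml _, h => h.elim

theorem trans : ∀ {a b c : SeqElem}, EEq a b → EEq b c → EEq a c
  | .fml _, .fml _, .fml _, h1, h2 => Eq.trans h1 h2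
  | .nest _, .nest _, .nest _, h1, h2 => SeqEquiv.trans h1 h2
  | .fml _, .nest _, _, h, _ => h.elim
  | .nest _, .fml _, _, h, _ => h.elim
  | .nest _, .nest _, .fml _, _, h => h.elim
  | .fml _, .fml _, .nest _, _, h => h.elim

theorem consEquiv : ∀ {e e' : SeqElem}, EEq e e' → ∀ {Γ Δ : Sequent},
    SeqEquiv Γ Δ → SeqEquiv (e :: Γ) (e' :: Δ)
  | .fml _, .fml _, h, _, _, hΓ => by cases h; exact .cons hΓ
  | .nest _, .nest _, h, _, _, hΓ => .consNest h hΓ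
  | .fml _, .nest _, h, _, _, _ => h.elim
  | .nest _, .fml _, h, _, _, _ => h.elim

end EEq

/-! ### Generic one-position surgeries -/

/-- `At L Δ Θ`: somewhere (in one of the lists of the nested sequent `Θ`), from some
position onwards, the local surgery `L` relates (tail of) `Δ` and (tail of) `Θ`. -/
inductive At (L : Sequent → Sequent → Prop) : Sequent → Sequent → Prop
  | here {Γ Δ : Sequent} : L Γ Δ → At L Γ Δ
  | cons (f : SeqElem) {Γ Δ : Sequent} : At L Γ Δ → At L (f :: Γ) (f :: Δ)
  | nest {N N' : Sequent} (Γ : Sequent) : At L N N' → At L (.nest N :: Γ) (.nest N' :: Γ)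

namespace At

theorem appendL {L} (σ : Sequent) {Γ Δ : Sequent} (h : At L Γ Δ) :
    At L (σ ++ Γ) (σ ++ Δ) := by
  induction σ with
  | nil => exact h
  | cons f σ ih => exact cons f ih

theorem fillCtx {L} (c : Ctx) {Γ Δ : Sequent} (h : At L Γ Δ) :
    At L (c.fill Γ) (c.fill Δ) := by
  induction c with
  | hole σ => exact appendL σ h
  | nest σ c ih => exact nest σ ih

theorem appendR {L} (hL : ∀ {Γ Δ : Sequent} (τ : Sequent), L Γ Δ → L (Γ ++ τ) (Δ ++ τ))
    {Γ Δ : Sequent} (h : At L Γ Δ) (τ : Sequent) : At L (Γ ++ τ) (Δ ++ τ) := by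
  induction h with
  | here l => exact here (hL τ l)
  | cons f _ ih => exact cons f ih
  | nest Γ h' => exact nest (Γ ++ τ) h'

theorem append_split {L} {Δ Γ₁ Γ₂ : Sequent} (h : At L Δ (Γ₁ ++ Γ₂)) :
    (∃ Δ₂, At L Δ₂ Γ₂ ∧ Δ = Γ₁ ++ Δ₂) ∨
    (∃ σ₁ σ₂ Δ₀, Γ₁ = σ₁ ++ σ₂ ∧ σ₂ ≠ [] ∧ L Δ₀ (σ₂ ++ Γ₂) ∧ Δ = σ₁ ++ Δ₀) ∨
    (∃ Δ₁, (∀ t, At L (Δ₁ ++ t) (Γ₁ ++ t)) ∧ Δ = Δ₁ ++ Γ₂) := by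
  induction Γ₁ generalizing Δ with
  | nil => exact .inl ⟨Δ, h, rfl⟩
  | cons f Γ₁ ih =>
    cases h with
    | here l => exact .inr (.inl ⟨[], f :: Γ₁, Δ, rfl, by simp, l, rfl⟩)
    | cons _ h' =>
      rcases ih h' with ⟨Δ₂, h2, rfl⟩ | ⟨σ₁, σ₂, Δ₀, heq, hne, l, rfl⟩ | ⟨Δ₁, hu, rfl⟩
      · exact .inl ⟨Δ₂, h2, rfl⟩
      · exact .inr (.inl ⟨f :: σ₁, σ₂, Δ₀, by rw [heq]; rfl, hne, l, rfl⟩)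
      · exact .inr (.inr ⟨f :: Δ₁, fun t => cons f (hu t), rfl⟩)
    | nest _ h' =>
      exact .inr (.inr ⟨_ :: Γ₁, fun t => nest (Γ₁ ++ t) h', rfl⟩)

theorem fill_split {L} {c : Ctx} {s Δ : Sequent} (h : At L Δ (c.fill s)) :
    (∃ c' : Ctx, (∀ t, At L (c'.fill t) (c.fill t)) ∧ c'.depth = c.depth ∧ Δ = c'.fill s) ∨
    (∃ s', At L s' s ∧ Δ = c.fill s') ∨
    (∃ (c₂ : Ctx) (σ₂ Δ₀ : Sequent), σ₂ ≠ [] ∧ (∀ t, c.fill t = c₂.fill (σ₂ ++ t)) ∧ c₂.depth = c.depth ∧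
        L Δ₀ (σ₂ ++ s) ∧ Δ = c₂.fill Δ₀) ∨
    (∃ (cP : Ctx) (Δl : Sequent) (c₁ : Ctx) (Δ₀ : Sequent), (∀ t, c.fill t = cP.fill (.nest (c₁.fill t) :: Δl)) ∧
        L Δ₀ (.nest (c₁.fill s) :: Δl) ∧ Δ = cP.fill Δ₀ ∧
        c.depth = cP.depth + c₁.depth + 1) := by
  induction c generalizing Δ with
  | hole Δl =>
    rcases h.append_split with ⟨Δ₂, h2, rfl⟩ | ⟨σ₁, σ₂, Δ₀, heq, hne, l, rfl⟩ | ⟨Δ₁, hu, rfl⟩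
    · exact .inr (.inl ⟨Δ₂, h2, rfl⟩)
    · exact .inr (.inr (.inl ⟨.hole σ₁, σ₂, Δ₀, hne,
        fun t => by simp [Ctx.fill, heq], rfl, l, rfl⟩))
    · exact .inl ⟨.hole Δ₁, fun t => hu t, rfl, rfl⟩
  | nest Δl cin ih =>
    cases h with
    | here l =>
      exact .inr (.inr (.inr ⟨.hole [], Δl, cin, Δ, fun t => rfl, l, by simp [Ctx.fill],
        by simp [Ctx.depth]⟩))
    | cons f h' =>
      rename_i Δs
      exact .inl ⟨.nest Δs cin, fun t => cons _ h', rfl, rfl⟩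
    | nest _ h' =>
      rcases ih h' with ⟨c', hu, hd, rfl⟩ | ⟨s', hs, rfl⟩ |
        ⟨c₂, σ₂, Δ₀, hne, hfe, hd, l, rfl⟩ | ⟨cP, Δl', c₁, Δ₀, hfe, l, rfl, hd⟩
      · exact .inl ⟨.nest Δl c', fun t => nest Δl (hu t), by simp [Ctx.depth, hd], rfl⟩
      · exact .inr (.inl ⟨s', hs, rfl⟩)
      · exact .inr (.inr (.inl ⟨.nest Δl c₂, σ₂, Δ₀, hne,
          fun t => by simp [Ctx.fill, hfe t], by simp [Ctx.depth, hd], l, rfl⟩))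
      · exact .inr (.inr (.inr ⟨.nest Δl cP, Δl', c₁, Δ₀,
          fun t => by simp [Ctx.fill, hfe t], l, rfl, by simp [Ctx.depth, hd]; omega⟩))

end At
/-! ### The local surgeries -/

/-- payload of unfolding a box formula into a bracket -/
def payload (A : Formula) : Sequent := [.fml (.dia A.negate), .fml A]

/-- pair surgery: a "kept" element `x` at the head, a second element `y` somewhere in the
tail; the two are replaced by the single element `z`, at the head position. -/
def LP (R : SeqElem → SeqElem → SeqElem → Prop) (Δl Θl : Sequent) : Prop :=
  ∃ x y z T T', Θl = x :: T ∧ InsTop y T' T ∧ R x y z ∧ Δl = z :: T'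

/-- contraction of a pair of identical formulas -/
def RC (A : Formula) : SeqElem → SeqElem → SeqElem → Prop :=
  fun x y z => x = .fml A ∧ y = .fml A ∧ z = .fml A

/-- fusion: absorb a box formula or a bracket into another bracket in the same list -/
def RF : SeqElem → SeqElem → SeqElem → Prop := fun x y z =>
  (∃ A N, x = .fml (.box A) ∧ y = .nest N ∧ z = .nest (N ++ payload A)) ∨
  (∃ A N, x = .nest N ∧ y = .fml (.box A) ∧ z = .nest (N ++ payload A)) ∨
  (∃ N' N, x = .nest N' ∧ y = .nest N ∧ z = .nest (N' ++ N))

abbrev LC (A : Formula) := LP (RC A)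
abbrev LF := LP RF

/-- replacement of a single formula occurrence by a list -/
def LR (F : Formula) (ρ : Sequent) (Δl Θl : Sequent) : Prop :=
  ∃ T, Θl = .fml F :: T ∧ Δl = ρ ++ T

theorem LP.appendR {R} {Δl Θl : Sequent} (τ : Sequent) (h : LP R Δl Θl) :
    LP R (Δl ++ τ) (Θl ++ τ) := by
  obtain ⟨x, y, z, T, T', rfl, hIT, hR, rfl⟩ := h
  exact ⟨x, y, z, T ++ τ, T' ++ τ, by simp, hIT.appendR τ, hR, by simp⟩

theorem LR.appendR {F ρ} {Δl Θl : Sequent} (τ : Sequent) (h : LR F ρ Δl Θl) :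
    LR F ρ (Δl ++ τ) (Θl ++ τ) := by
  obtain ⟨T, rfl, rfl⟩ := h
  exact ⟨T ++ τ, by simp, by simp⟩

/-! ### Transfer of surgeries along SeqEquiv -/

theorem transfer_InsTop : ∀ {Γ Θ : Sequent}, SeqEquiv Γ Θ → ∀ {y : SeqElem} {T' : Sequent},
    InsTop y T' Θ → ∃ y' T'', EEq y' y ∧ InsTop y' T'' Γ ∧ SeqEquiv T'' T' := by
  intro Γ Θ h
  induction h with
  | nil => intro y T' h; cases h
  | @cons e Γ₀ Δ₀ h ih =>
    intro y T' hIT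
    cases hIT with
    | head => exact ⟨e, Γ₀, EEq.refl e, .head Γ₀, h⟩
    | cons _ hIT' =>
      obtain ⟨y', T'', he, hi, ht⟩ := ih hIT'
      exact ⟨y', e :: T'', he, .cons e hi, .cons ht⟩
  | @consNest N N' Γ₀ Δ₀ h1 h2 ih1 ih2 =>
    intro y T' hIT
    cases hIT with
    | head => exact ⟨.nest N, Γ₀, h1, .head Γ₀, h2⟩
    | cons _ hIT' =>
      obtain ⟨y', T'', he, hi, ht⟩ := ih2 hIT'
      exact ⟨y', .nest N :: T'', he, .cons _ hi, SeqEquiv.consNest h1 ht⟩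
  | swap a b Γ₀ =>
    intro y T' hIT
    cases hIT with
    | head => exact ⟨b, a :: Γ₀, EEq.refl b, .cons a (.head Γ₀), SeqEquiv.refl _⟩
    | cons _ hIT' =>
      cases hIT' with
      | head => exact ⟨a, b :: Γ₀, EEq.refl a, .head _, SeqEquiv.refl _⟩
      | cons _ hIT'' =>
        exact ⟨y, a :: b :: _, EEq.refl y, .cons a (.cons b hIT''), .swap a b _⟩
  | trans h1 h2 ih1 ih2 =>
    intro y T' hIT
    obtain ⟨y', T'', he, hi, ht⟩ := ih2 hIT
    obtain ⟨y'', T''', he', hi', ht'⟩ := ih1 hi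
    exact ⟨y'', T''', he'.trans he, hi', ht'.trans ht⟩

section TransferLP

variable {R : SeqElem → SeqElem → SeqElem → Prop}
variable (hEEq : ∀ {x y z x' y'}, R x y z → EEq x x' → EEq y y' → ∃ z', R x' y' z' ∧ EEq z z')
variable (hSym : ∀ {x y z}, R x y z → ∃ z', R y x z' ∧ EEq z z')

include hEEq hSym in
theorem transfer_LP : ∀ {Γ Θ : Sequent}, SeqEquiv Γ Θ → ∀ {Δ : Sequent},
    At (LP R) Δ Θ → ∃ Δ', At (LP R) Δ' Γ ∧ SeqEquiv Δ' Δ := by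
  intro Γ Θ h
  induction h with
  | nil => intro Δ h; cases h with | here l => obtain ⟨x, y, z, T, T', h, _⟩ := l; cases h
  | @cons e Γ₀ Θ₀ h ih =>
    intro Δ hAt
    cases hAt with
    | here l =>
      obtain ⟨x, y, z, T, T', heq, hIT, hR, rfl⟩ := l
      cases heq
      obtain ⟨y', T'', he, hi, ht⟩ := transfer_InsTop h hIT
      obtain ⟨z', hR', hz⟩ := hEEq hR (EEq.refl e) he.symm
      exact ⟨z' :: T'', .here ⟨e, y', z', Γ₀, T'', rfl, hi, hR', rfl⟩,
        EEq.consEquiv hz.symm ht⟩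
    | cons _ hAt' =>
      obtain ⟨Δ'', hA, hE⟩ := ih hAt'
      exact ⟨e :: Δ'', .cons e hA, .cons hE⟩
    | nest _ hAt' =>
      rename_i N _
      exact ⟨.nest N :: Γ₀, .nest Γ₀ hAt', SeqEquiv.consNest (SeqEquiv.refl N) h⟩
  | @consNest N N' Γ₀ Θ₀ h1 h2 ih1 ih2 =>
    intro Δ hAt
    cases hAt with
    | here l =>
      obtain ⟨x, y, z, T, T', heq, hIT, hR, rfl⟩ := l
      cases heq
      obtain ⟨y', T'', he, hi, ht⟩ := transfer_InsTop h2 hIT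
      obtain ⟨z', hR', hz⟩ := hEEq hR (EEq.symm (show EEq (.nest N) (.nest N') from h1)) he.symm
      exact ⟨z' :: T'', .here ⟨.nest N, y', z', Γ₀, T'', rfl, hi, hR', rfl⟩,
        EEq.consEquiv hz.symm ht⟩
    | cons _ hAt' =>
      obtain ⟨Δ'', hA, hE⟩ := ih2 hAt'
      exact ⟨.nest N :: Δ'', .cons _ hA, EEq.consEquiv (show EEq (.nest N) (.nest N') from h1) hE⟩
    | nest _ hAt' =>
      obtain ⟨M', hA, hE⟩ := ih1 hAt'
      exact ⟨.nest M' :: Γ₀, .nest Γ₀ hA, SeqEquiv.consNest hE h2⟩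
  | swap a b Γ₀ =>
    intro Δ hAt
    cases hAt with
    | here l =>
      obtain ⟨x, y, z, T, T', heq, hIT, hR, rfl⟩ := l
      cases heq
      cases hIT with
      | head =>
        obtain ⟨z', hR', hz⟩ := hSym hR
        exact ⟨z' :: Γ₀, .here ⟨a, b, z', b :: Γ₀, Γ₀, rfl, .head Γ₀, hR', rfl⟩,
          EEq.consEquiv hz.symm (SeqEquiv.refl _)⟩
      | cons _ hIT' =>
        rename_i T₂
        exact ⟨a :: z :: T₂, .cons a (.here ⟨b, y, z, Γ₀, T₂, rfl, hIT', hR, rfl⟩),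
          .swap a z T₂⟩
    | cons _ hAt' =>
      cases hAt' with
      | here l =>
        obtain ⟨x, y, z, T, T', heq, hIT, hR, rfl⟩ := l
        cases heq
        exact ⟨z :: b :: T', .here ⟨a, y, z, b :: Γ₀, b :: T', rfl, .cons b hIT, hR, rfl⟩,
          .swap z b T'⟩
      | cons _ hAt'' =>
        rename_i Δs
        exact ⟨a :: b :: Δs, .cons a (.cons b hAt''), .swap a b Δs⟩
      | nest _ hAt'' =>
        exact ⟨_, .nest (b :: Γ₀) hAt'', .swap _ b Γ₀⟩
    | nest _ hAt' =>
      exact ⟨_, .cons a (.nest Γ₀ hAt'), .swap a _ Γ₀⟩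
  | trans h1 h2 ih1 ih2 =>
    intro Δ hAt
    obtain ⟨Δ₂, hA2, hE2⟩ := ih2 hAt
    obtain ⟨Δ₁, hA1, hE1⟩ := ih1 hA2
    exact ⟨Δ₁, hA1, hE1.trans hE2⟩

end TransferLP

theorem RC.hEEq {A : Formula} : ∀ {x y z x' y' : SeqElem}, RC A x y z → EEq x x' → EEq y y' →
    ∃ z', RC A x' y' z' ∧ EEq z z' := by
  rintro x y z x' y' ⟨rfl, rfl, rfl⟩ h1 h2
  cases x' with
  | fml B => cases y' with
    | fml C =>
      cases (show A = B from h1); cases (show A = C from h2)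
      exact ⟨.fml A, ⟨rfl, rfl, rfl⟩, EEq.refl _⟩
    | nest _ => exact h2.elim
  | nest _ => exact h1.elim

theorem RC.hSym {A : Formula} : ∀ {x y z : SeqElem}, RC A x y z →
    ∃ z', RC A y x z' ∧ EEq z z' := by
  rintro x y z ⟨rfl, rfl, rfl⟩
  exact ⟨.fml A, ⟨rfl, rfl, rfl⟩, EEq.refl _⟩

theorem RF.hEEq : ∀ {x y z x' y' : SeqElem}, RF x y z → EEq x x' → EEq y y' →
    ∃ z', RF x' y' z' ∧ EEq z z' := by
  rintro x y z x' y' (⟨A, N, rfl, rfl, rfl⟩ | ⟨A, N, rfl, rfl, rfl⟩ | ⟨N', N, rfl, rfl, rfl⟩) h1 h2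
  · cases x' with
    | nest _ => exact h1.elim
    | fml B =>
      cases (show Formula.box A = B from h1)
      cases y' with
      | fml _ => exact h2.elim
      | nest M =>
        exact ⟨.nest (M ++ payload A), .inl ⟨A, M, rfl, rfl, rfl⟩,
          SeqEquiv.appendR (show SeqEquiv N M from h2) _⟩
  · cases y' with
    | nest _ => exact h2.elim
    | fml B =>
      cases (show Formula.box A = B from h2)
      cases x' with
      | fml _ => exact h1.elim
      | nest M =>
        exact ⟨.nest (M ++ payload A), .inr (.inl ⟨A, M, rfl, rfl, rfl⟩),
          SeqEquiv.appendR (show SeqEquiv N M from h1) _⟩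
  · cases x' with
    | fml _ => exact h1.elim
    | nest M' =>
      cases y' with
      | fml _ => exact h2.elim
      | nest M =>
        exact ⟨.nest (M' ++ M), .inr (.inr ⟨M', M, rfl, rfl, rfl⟩),
          SeqEquiv.trans (SeqEquiv.appendR (show SeqEquiv N' M' from h1) _)
            (SeqEquiv.appendL M' (show SeqEquiv N M from h2))⟩

theorem RF.hSym : ∀ {x y z : SeqElem}, RF x y z → ∃ z', RF y x z' ∧ EEq z z' := by
  rintro x y z (⟨A, N, rfl, rfl, rfl⟩ | ⟨A, N, rfl, rfl, rfl⟩ | ⟨N', N, rfl, rfl, rfl⟩)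
  · exact ⟨.nest (N ++ payload A), .inr (.inl ⟨A, N, rfl, rfl, rfl⟩), EEq.refl _⟩
  · exact ⟨.nest (N ++ payload A), .inl ⟨A, N, rfl, rfl, rfl⟩, EEq.refl _⟩
  · exact ⟨.nest (N ++ N'), .inr (.inr ⟨N, N', rfl, rfl, rfl⟩), SeqEquiv.append_comm N' N⟩

theorem transfer_LR {F ρ} : ∀ {Γ Θ : Sequent}, SeqEquiv Γ Θ → ∀ {Δ : Sequent},
    At (LR F ρ) Δ Θ → ∃ Δ', At (LR F ρ) Δ' Γ ∧ SeqEquiv Δ' Δ := by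
  intro Γ Θ h
  induction h with
  | nil => intro Δ h; cases h with | here l => obtain ⟨T, h, _⟩ := l; cases h
  | @cons e Γ₀ Θ₀ h ih =>
    intro Δ hAt
    cases hAt with
    | here l =>
      obtain ⟨T, heq, rfl⟩ := l
      cases heq
      exact ⟨ρ ++ Γ₀, .here ⟨Γ₀, rfl, rfl⟩, SeqEquiv.appendL ρ h⟩
    | cons _ hAt' =>
      obtain ⟨Δ'', hA, hE⟩ := ih hAt'
      exact ⟨e :: Δ'', .cons e hA, .cons hE⟩
    | nest _ hAt' =>
      rename_i N _
      exact ⟨.nest N :: Γ₀, .nest Γ₀ hAt', SeqEquiv.consNest (SeqEquiv.refl N) h⟩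
  | @consNest N N' Γ₀ Θ₀ h1 h2 ih1 ih2 =>
    intro Δ hAt
    cases hAt with
    | here l => obtain ⟨T, heq, rfl⟩ := l; cases heq
    | cons _ hAt' =>
      obtain ⟨Δ'', hA, hE⟩ := ih2 hAt'
      exact ⟨.nest N :: Δ'', .cons _ hA, SeqEquiv.consNest h1 hE⟩
    | nest _ hAt' =>
      obtain ⟨M', hA, hE⟩ := ih1 hAt'
      exact ⟨.nest M' :: Γ₀, .nest Γ₀ hA, SeqEquiv.consNest hE h2⟩
  | swap a b Γ₀ =>
    intro Δ hAt
    cases hAt with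
    | here l =>
      obtain ⟨T, heq, rfl⟩ := l
      cases heq
      exact ⟨a :: (ρ ++ Γ₀), .cons a (.here ⟨Γ₀, rfl, rfl⟩), SeqEquiv.middle' ρ a Γ₀⟩
    | cons _ hAt' =>
      cases hAt' with
      | here l =>
        obtain ⟨T, heq, rfl⟩ := l
        cases heq
        exact ⟨ρ ++ b :: Γ₀, .here ⟨b :: Γ₀, rfl, rfl⟩,
          (SeqEquiv.middle ρ b Γ₀).trans (.cons (SeqEquiv.refl _)) |>.symm.symm⟩
      | cons _ hAt'' =>
        rename_i Δs
        exact ⟨a :: b :: Δs, .cons a (.cons b hAt''), .swap a b Δs⟩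
      | nest _ hAt'' =>
        exact ⟨_, .nest (b :: Γ₀) hAt'', .swap _ b Γ₀⟩
    | nest _ hAt' =>
      exact ⟨_, .cons a (.nest Γ₀ hAt'), .swap a _ Γ₀⟩
  | trans h1 h2 ih1 ih2 =>
    intro Δ hAt
    obtain ⟨Δ₂, hA2, hE2⟩ := ih2 hAt
    obtain ⟨Δ₁, hA1, hE1⟩ := ih1 hA2
    exact ⟨Δ₁, hA1, hE1.trans hE2⟩
/-! ### Inversion helpers -/

theorem LR_nil {F ρ Δ₀} : ¬ LR F ρ Δ₀ [] := by rintro ⟨T, h, -⟩; cases h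

theorem LR_not_nest {F ρ Δ₀ N T} (h : LR F ρ Δ₀ (.nest N :: T)) : False := by
  obtain ⟨T', heq, -⟩ := h
  injection heq with h1 _
  exact SeqElem.noConfusion h1

theorem at_nil {L : Sequent → Sequent → Prop} {Δ} (hL : ∀ Δ₀, ¬ L Δ₀ [])
    (h : At L Δ []) : False := by
  cases h with | here l => exact hL _ l

theorem atLR_single {F ρ Δ G} (h : At (LR F ρ) Δ [.fml G]) : F = G ∧ Δ = ρ := by
  cases h with
  | here l =>
    obtain ⟨T, heq, rfl⟩ := l
    injection heq with h1 h2
    injection h1 with h1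
    subst h2
    exact ⟨h1.symm, by simp⟩
  | cons _ h' => exact ((at_nil (fun _ => LR_nil) h')).elim

theorem atLR_pair {F ρ Δ G H} (h : At (LR F ρ) Δ [.fml G, .fml H]) :
    (F = G ∧ Δ = ρ ++ [SeqElem.fml H]) ∨ (F = H ∧ Δ = .fml G :: ρ) := by
  cases h with
  | here l =>
    obtain ⟨T, heq, rfl⟩ := l
    injection heq with h1 h2
    injection h1 with h1
    subst h2
    exact .inl ⟨h1.symm, rfl⟩
  | cons _ h' =>
    obtain ⟨h1, rfl⟩ := atLR_single h'
    exact .inr ⟨h1, rfl⟩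

theorem LR_M_refine {F ρ} {σ₂ Δ₀ s : Sequent} (hne : σ₂ ≠ [])
    (l : LR F ρ Δ₀ (σ₂ ++ s)) :
    ∃ σ', σ₂ = .fml F :: σ' ∧ Δ₀ = ρ ++ (σ' ++ s) := by
  obtain ⟨T, heq, rfl⟩ := l
  cases σ₂ with
  | nil => exact absurd rfl hne
  | cons e σ' =>
    injection heq with h1 h2
    subst h1; subst h2
    exact ⟨σ', rfl, rfl⟩

theorem LR_M_to_U {F ρ} {c c₂ : Ctx} {σ₂ Δ₀ s : Sequent} (hne : σ₂ ≠ [])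
    (hfe : ∀ t, c.fill t = c₂.fill (σ₂ ++ t)) (hdep : c₂.depth = c.depth)
    (l : LR F ρ Δ₀ (σ₂ ++ s)) :
    ∃ c' : Ctx, (∀ t, At (LR F ρ) (c'.fill t) (c.fill t)) ∧ c'.depth = c.depth ∧
      c₂.fill Δ₀ = c'.fill s := by
  obtain ⟨σ', rfl, rfl⟩ := LR_M_refine hne l
  refine ⟨c₂.ext (ρ ++ σ'), fun t => ?_, by simp [hdep], by simp⟩
  rw [hfe t, Ctx.ext_fill]
  have : At (LR F ρ) (c₂.fill (ρ ++ (σ' ++ t))) (c₂.fill (.fml F :: (σ' ++ t))) :=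
    At.fillCtx c₂ (At.here ⟨σ' ++ t, rfl, rfl⟩)
  simpa using this

/-! ### Generic height-preserving inversion -/

theorem inv_adm {F : Formula} {ρ : Sequent}
    (hbox : ∀ B, F ≠ .box B) (hdia : ∀ B, F ≠ .dia B)
    (hpos : ∀ a, F ≠ .pos a) (hneg : ∀ a, F ≠ .neg a)
    (hand : ∀ A B, F = .and A B → ∀ {n : ℕ} {c : Ctx},
      DerivH n (c.fill [.fml A]) → DerivH n (c.fill [.fml B]) → DerivH n (c.fill ρ))
    (hor : ∀ A B, F = .or A B → ∀ {n : ℕ} {c : Ctx},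
      DerivH n (c.fill [.fml A, .fml B]) → DerivH n (c.fill ρ)) :
    ∀ {n : ℕ} {Θ : Sequent}, DerivH n Θ → ∀ {Δ : Sequent},
      At (LR F ρ) Δ Θ → DerivH n Δ := by
  intro n Θ hd
  induction hd with
  | id n c a =>
    intro Δ hAt
    rcases hAt.fill_split with ⟨c', hu, hdep, rfl⟩ | ⟨s', hs, rfl⟩ |
      ⟨c₂, σ₂, Δ₀, hne, hfe, hdep, l, rfl⟩ | ⟨cP, Δl, c₁, Δ₀, hfe, l, rfl, hd⟩
    · exact .id n c' a
    · rcases atLR_pair hs with ⟨h1, rfl⟩ | ⟨h1, rfl⟩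
      · exact absurd h1 (hpos a)
      · exact absurd h1 (hneg a)
    · obtain ⟨c', hu, hdep', heq⟩ := LR_M_to_U hne hfe hdep l
      rw [heq]; exact .id n c' a
    · exact (LR_not_nest l).elim
  | @and k c A B p1 p2 ih1 ih2 =>
    intro Δ hAt
    rcases hAt.fill_split with ⟨c', hu, hdep, rfl⟩ | ⟨s', hs, rfl⟩ |
      ⟨c₂, σ₂, Δ₀, hne, hfe, hdep, l, rfl⟩ | ⟨cP, Δl, c₁, Δ₀, hfe, l, rfl, hd⟩
    · exact .and (ih1 (hu _)) (ih2 (hu _))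
    · obtain ⟨h1, rfl⟩ := atLR_single hs
      subst h1
      exact .up (hand A B rfl p1 p2)
    · obtain ⟨c', hu, hdep', heq⟩ := LR_M_to_U hne hfe hdep l
      rw [heq]; exact .and (ih1 (hu _)) (ih2 (hu _))
    · exact (LR_not_nest l).elim
  | @or k c A B p ih =>
    intro Δ hAt
    rcases hAt.fill_split with ⟨c', hu, hdep, rfl⟩ | ⟨s', hs, rfl⟩ |
      ⟨c₂, σ₂, Δ₀, hne, hfe, hdep, l, rfl⟩ | ⟨cP, Δl, c₁, Δ₀, hfe, l, rfl, hd⟩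
    · exact .or (ih (hu _))
    · obtain ⟨h1, rfl⟩ := atLR_single hs
      subst h1
      exact .up (hor A B rfl p)
    · obtain ⟨c', hu, hdep', heq⟩ := LR_M_to_U hne hfe hdep l
      rw [heq]; exact .or (ih (hu _))
    · exact (LR_not_nest l).elim
  | @box k c A p ih =>
    intro Δ hAt
    rcases hAt.fill_split with ⟨c', hu, hdep, rfl⟩ | ⟨s', hs, rfl⟩ |
      ⟨c₂, σ₂, Δ₀, hne, hfe, hdep, l, rfl⟩ | ⟨cP, Δl, c₁, Δ₀, hfe, l, rfl, hd⟩
    · exact .box (ih (hu _))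
    · obtain ⟨h1, rfl⟩ := atLR_single hs
      exact absurd h1 (hbox A)
    · obtain ⟨c', hu, hdep', heq⟩ := LR_M_to_U hne hfe hdep l
      rw [heq]; exact .box (ih (hu _))
    · exact (LR_not_nest l).elim
  | @dia k c d A hdep0 p ih =>
    intro Δ hAt
    rcases hAt.fill_split with ⟨c', hu, hdep, rfl⟩ | ⟨s', hs, rfl⟩ |
      ⟨c₂, σ₂, Δ₀, hne, hfe, hdep, l, rfl⟩ | ⟨cP, Δl, c₁, Δ₀, hfe, l, rfl, hd⟩
    · exact .dia c' d hdep0 (ih (hu _))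
    · -- occurrence inside `d.fill [] ++ [◇A]`
      rcases hs.append_split with ⟨Δ₂, h2, rfl⟩ | ⟨σ₁, σ₂, Δ₀, heq, hne, l, rfl⟩ | ⟨Δ₁, hu, rfl⟩
      · obtain ⟨h1, rfl⟩ := atLR_single h2
        exact absurd h1 (hdia A)
      · -- occurrence in the top-level sibling list of `d`
        obtain ⟨σ', rfl, rfl⟩ := LR_M_refine hne l
        cases d with
        | hole Δ1 => simp [Ctx.depth] at hdep0
        | nest Δ₁ din =>
          simp only [Ctx.fill] at heq
          cases σ₁ with
          | nil => simp at heq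
          | cons e σ₁' =>
            injection heq with h1 h2
            subst h1; subst h2
            set d₃ : Ctx := Ctx.nest (σ₁' ++ (ρ ++ σ')) din with hd₃
            have hw : At (LR F ρ) (c.fill (d₃.fill [.fml A] ++ [.fml (.dia A)]))
                (c.fill ((Ctx.nest (σ₁' ++ (.fml F :: σ')) din).fill [.fml A] ++ [.fml (.dia A)])) := by
              have base : At (LR F ρ)
                  (σ₁' ++ (ρ ++ (σ' ++ [SeqElem.fml (Formula.dia A)])))
                  (σ₁' ++ (.fml F :: (σ' ++ [SeqElem.fml (Formula.dia A)]))) :=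
                At.appendL σ₁' (At.here ⟨_, rfl, rfl⟩)
              have base2 := At.fillCtx c (At.cons (.nest (din.fill [.fml A])) base)
              simpa [Ctx.fill, hd₃] using base2
            have hder := ih hw
            have := DerivH.dia c d₃ (by simp [Ctx.depth, hd₃]) hder
            simpa [Ctx.fill, hd₃] using this
      · have h0 : At (LR F ρ) Δ₁ (d.fill []) := by simpa using hu []
        have handle : ∀ d' : Ctx, (∀ t, At (LR F ρ) (d'.fill t) (d.fill t)) →
            d'.depth = d.depth → Δ₁ = d'.fill [] →
            DerivH (k + 1) (c.fill (Δ₁ ++ [.fml (.dia A)])) := by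
          intro d' hu' hdep' h'
          have hw := At.fillCtx c ((hu' [.fml A]).appendR
            (fun τ l => LR.appendR τ l) [.fml (.dia A)])
          have := DerivH.dia c d' (hdep' ▸ hdep0) (ih hw)
          rw [h']
          exact this
        rcases h0.fill_split with ⟨d', hu', hdep', rfl⟩ | ⟨s'', hs'', rfl⟩ |
          ⟨d₂, σ₂, Δ₀, hne, hfe, hdepd, l, rfl⟩ | ⟨dP, Δl, d₁, Δ₀, hfe, l, rfl, hd⟩
        · exact handle d' hu' hdep' rfl
        · exact (at_nil (fun _ => LR_nil) hs'').elim
        · obtain ⟨d', hu', hdep', heq⟩ := LR_M_to_U hne hfe hdepd l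
          exact handle d' hu' hdep' heq
        · exact (LR_not_nest l).elim
    · obtain ⟨c', hu, hdep', heq⟩ := LR_M_to_U hne hfe hdep l
      rw [heq]; exact .dia c' d hdep0 (ih (hu _))
    · exact (LR_not_nest l).elim
  | exch h hsub ih =>
    intro Δ hAt
    obtain ⟨Δ', hA, hE⟩ := transfer_LR h hAt
    exact .exch hE (ih hA)
  | up hsub ih =>
    intro Δ hAt
    exact .up (ih hAt)
/-! ### Instances of inversion -/

theorem inv_and_left {A B : Formula} {n : ℕ} {Θ Δ : Sequent} (hd : DerivH n Θ)
    (hAt : At (LR (.and A B) [.fml A]) Δ Θ) : DerivH n Δ := by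
  refine inv_adm ?_ ?_ ?_ ?_ ?_ ?_ hd hAt
  · intro B' h; cases h
  · intro B' h; cases h
  · intro a h; cases h
  · intro a h; cases h
  · intro A' B' h
    injection h with h1 h2; subst h1; subst h2
    intro n c p1 p2; exact p1
  · intro A' B' h; cases h

theorem inv_and_right {A B : Formula} {n : ℕ} {Θ Δ : Sequent} (hd : DerivH n Θ)
    (hAt : At (LR (.and A B) [.fml B]) Δ Θ) : DerivH n Δ := by
  refine inv_adm ?_ ?_ ?_ ?_ ?_ ?_ hd hAt
  · intro B' h; cases h
  · intro B' h; cases h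
  · intro a h; cases h
  · intro a h; cases h
  · intro A' B' h
    injection h with h1 h2; subst h1; subst h2
    intro n c p1 p2; exact p2
  · intro A' B' h; cases h

theorem inv_or {A B : Formula} {n : ℕ} {Θ Δ : Sequent} (hd : DerivH n Θ)
    (hAt : At (LR (.or A B) [.fml A, .fml B]) Δ Θ) : DerivH n Δ := by
  refine inv_adm ?_ ?_ ?_ ?_ ?_ ?_ hd hAt
  · intro B' h; cases h
  · intro B' h; cases h
  · intro a h; cases h
  · intro a h; cases h
  · intro A' B' h; cases h
  · intro A' B' h
    injection h with h1 h2; subst h1; subst h2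
    intro n c p; exact p

/-! ### Helpers for pair-shaped surgeries -/

theorem InsTop.appendL {e : SeqElem} (σ : Sequent) {Γ Δ : Sequent} (h : InsTop e Γ Δ) :
    InsTop e (σ ++ Γ) (σ ++ Δ) := by
  induction σ with
  | nil => exact h
  | cons f σ ih => exact .cons f ih

theorem InsTop_single {y : SeqElem} {τ : Sequent} {e : SeqElem}
    (h : InsTop y τ [e]) : y = e ∧ τ = [] := by
  cases h with
  | head => exact ⟨rfl, rfl⟩
  | cons _ h' => cases h'

theorem LP_nil {R Δ₀} : ¬ LP R Δ₀ [] := by rintro ⟨x, y, z, T, T', h, -⟩; cases h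

theorem atLP_fml_single {R : SeqElem → SeqElem → SeqElem → Prop} {Δ : Sequent} {G : Formula}
    (h : At (LP R) Δ [.fml G]) : False := by
  cases h with
  | here l =>
    obtain ⟨x, y, z, T, T', heq, hIT, -, -⟩ := l
    injection heq with h1 h2
    subst h2
    cases hIT
  | cons _ h' => exact at_nil (fun _ => LP_nil) h'

theorem atLP_fml_pair {R : SeqElem → SeqElem → SeqElem → Prop} {Δ : Sequent} {G H : Formula}
    (h : At (LP R) Δ [.fml G, .fml H]) : ∃ z, R (.fml G) (.fml H) z ∧ Δ = [z] := by
  cases h with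
  | here l =>
    obtain ⟨x, y, z, T, T', heq, hIT, hR, rfl⟩ := l
    injection heq with h1 h2
    subst h1; subst h2
    obtain ⟨rfl, rfl⟩ := InsTop_single hIT
    exact ⟨z, hR, rfl⟩
  | cons _ h' => exact (atLP_fml_single h').elim

theorem LP_M_refine {R} {σ₂ Δ₀ s : Sequent} (hne : σ₂ ≠ []) (l : LP R Δ₀ (σ₂ ++ s)) :
    (∃ Δb, Δ₀ = Δb ++ s ∧ ∀ τ, LP R (Δb ++ τ) (σ₂ ++ τ)) ∨
    (∃ x y z σ₂' τ', σ₂ = x :: σ₂' ∧ InsTop y τ' s ∧ R x y z ∧ Δ₀ = z :: (σ₂' ++ τ')) := by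
  obtain ⟨x, y, z, T, T', heq, hIT, hR, rfl⟩ := l
  cases σ₂ with
  | nil => exact absurd rfl hne
  | cons x₀ σ₂' =>
    injection heq with h1 h2
    subst h1; subst h2
    rcases hIT.split with ⟨σ'', hi, rfl⟩ | ⟨τ', hi, rfl⟩
    · exact .inl ⟨z :: σ'', by simp, fun τ =>
        ⟨x₀, y, z, σ₂' ++ τ, σ'' ++ τ, rfl, hi.appendR τ, hR, by simp⟩⟩
    · exact .inr ⟨x₀, y, z, σ₂', τ', rfl, hi, hR, by simp⟩

theorem LP_localized_to_U {R} {c c₂ : Ctx} {σ₂ Δb : Sequent}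
    (hfe : ∀ t, c.fill t = c₂.fill (σ₂ ++ t)) (hdep : c₂.depth = c.depth)
    (hloc : ∀ τ, LP R (Δb ++ τ) (σ₂ ++ τ)) (s : Sequent) :
    ∃ c' : Ctx, (∀ t, At (LP R) (c'.fill t) (c.fill t)) ∧ c'.depth = c.depth ∧
      c₂.fill (Δb ++ s) = c'.fill s := by
  refine ⟨c₂.ext Δb, fun t => ?_, by simp [hdep], by simp⟩
  rw [hfe t, Ctx.ext_fill]
  exact At.fillCtx c₂ (At.here (hloc t))

theorem RF_y {x y z : SeqElem} (h : RF x y z) :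
    (∃ A, y = .fml (.box A)) ∨ (∃ N, y = .nest N) := by
  rcases h with ⟨A, N, -, rfl, -⟩ | ⟨A, N, -, rfl, -⟩ | ⟨N', N, -, rfl, -⟩
  · exact .inr ⟨N, rfl⟩
  · exact .inl ⟨A, rfl⟩
  · exact .inr ⟨N, rfl⟩

/-- The `P`-case handler for fuse: the fused "first" bracket lies on the hole path. -/
theorem LF_P_handler {cP : Ctx} {Δl : Sequent} {c₁ : Ctx} {Δ₀ s : Sequent}
    (l : LF Δ₀ (.nest (c₁.fill s) :: Δl)) :
    ∃ cM : Ctx, cM.depth = cP.depth + c₁.depth + 1 ∧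
      (∀ t, ∃ W, At LF W (cP.fill (.nest (c₁.fill t) :: Δl)) ∧ SeqEquiv (cM.fill t) W) ∧
      SeqEquiv (cP.fill Δ₀) (cM.fill s) := by
  obtain ⟨x, y, z, T, T', heq, hIT, hR, rfl⟩ := l
  injection heq with h1 h2
  subst h1; subst h2
  -- extract the absorbed payload X
  obtain ⟨X, hz, hcl⟩ : ∃ X, z = SeqElem.nest (c₁.fill s ++ X) ∧
      (∀ M, RF (.nest M) y (.nest (M ++ X))) := by
    rcases hR with ⟨A, N, hx, rfl, rfl⟩ | ⟨A, N, hx, rfl, rfl⟩ | ⟨N', N, hx, rfl, rfl⟩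
    · exact absurd hx (by simp)
    · injection hx with hx; subst hx
      exact ⟨payload A, rfl, fun M => .inr (.inl ⟨A, M, rfl, rfl, rfl⟩)⟩
    · injection hx with hx; subst hx
      exact ⟨N, rfl, fun M => .inr (.inr ⟨M, N, rfl, rfl, rfl⟩)⟩
  subst hz
  refine ⟨cP.comp (.nest T' (c₁.outer X)), by simp [Ctx.depth]; omega, fun t => ?_, ?_⟩
  · refine ⟨cP.fill (.nest (c₁.fill t ++ X) :: T'),
      At.fillCtx cP (At.here ⟨.nest (c₁.fill t), y, .nest (c₁.fill t ++ X), Δl, T',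
        rfl, hIT, hcl _, rfl⟩), ?_⟩
    exact (Ctx.comp_fill cP _ t).trans (cP.fill_cong (SeqEquiv.consNest
      ((Ctx.outer_fill c₁ X t).trans (SeqEquiv.append_comm X (c₁.fill t)))
      (SeqEquiv.refl T')))
  · refine SeqEquiv.symm ?_
    exact (Ctx.comp_fill cP _ s).trans (cP.fill_cong (SeqEquiv.consNest
      ((Ctx.outer_fill c₁ X s).trans (SeqEquiv.append_comm X (c₁.fill s)))
      (SeqEquiv.refl T')))
theorem RF_absorb_y {x : SeqElem} {C : Sequent} {z : SeqElem} (hR : RF x (.nest C) z) :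
    ∃ g : Sequent → Sequent, z = .nest (g C) ∧ (∀ M, RF x (.nest M) (.nest (g M))) ∧
      ∀ E0 : Ctx, ∃ E : Ctx, E.depth = E0.depth ∧ ∀ t, SeqEquiv (E.fill t) (g (E0.fill t)) := by
  rcases hR with ⟨A₁, N, rfl, hy, rfl⟩ | ⟨A₁, N, hx, hy, rfl⟩ | ⟨N', N, rfl, hy, rfl⟩
  · injection hy with hy; subst hy
    exact ⟨fun M => M ++ payload A₁, rfl, fun M => .inl ⟨A₁, M, rfl, rfl, rfl⟩,
      fun E0 => ⟨E0.outer (payload A₁), by simp, fun t =>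
        (Ctx.outer_fill E0 _ t).trans (SeqEquiv.append_comm _ _)⟩⟩
  · cases hy
  · injection hy with hy; subst hy
    exact ⟨fun M => N' ++ M, rfl, fun M => .inr (.inr ⟨N', M, rfl, rfl, rfl⟩),
      fun E0 => ⟨E0.outer N', by simp, fun t => Ctx.outer_fill E0 N' t⟩⟩

theorem RF_absorb_x {C : Sequent} {y z : SeqElem} (hR : RF (.nest C) y z) :
    ∃ g : Sequent → Sequent, z = .nest (g C) ∧ (∀ M, RF (.nest M) y (.nest (g M))) ∧
      ∀ E0 : Ctx, ∃ E : Ctx, E.depth = E0.depth ∧ ∀ t, SeqEquiv (E.fill t) (g (E0.fill t)) := by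
  rcases hR with ⟨A₁, N, hx, rfl, rfl⟩ | ⟨A₁, N, hx, rfl, rfl⟩ | ⟨N', N, hx, rfl, rfl⟩
  · cases hx
  · injection hx with hx; subst hx
    exact ⟨fun M => M ++ payload A₁, rfl, fun M => .inr (.inl ⟨A₁, M, rfl, rfl, rfl⟩),
      fun E0 => ⟨E0.outer (payload A₁), by simp, fun t =>
        (Ctx.outer_fill E0 _ t).trans (SeqEquiv.append_comm _ _)⟩⟩
  · injection hx with hx; subst hx
    exact ⟨fun M => M ++ N, rfl, fun M => .inr (.inr ⟨M, N, rfl, rfl, rfl⟩),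
      fun E0 => ⟨E0.outer N, by simp, fun t =>
        (Ctx.outer_fill E0 N t).trans (SeqEquiv.append_comm _ _)⟩⟩
theorem InsTop_pair {y : SeqElem} {τ : Sequent} {e₁ e₂ : SeqElem}
    (h : InsTop y τ [e₁, e₂]) : (y = e₁ ∧ τ = [e₂]) ∨ (y = e₂ ∧ τ = [e₁]) := by
  cases h with
  | head => exact .inl ⟨rfl, rfl⟩
  | cons _ h' =>
    obtain ⟨rfl, rfl⟩ := InsTop_single h'
    exact .inr ⟨rfl, rfl⟩

theorem RF_fml_nonbox {G : Formula} (hG : ∀ A, G ≠ .box A) {x z : SeqElem} :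
    ¬ RF x (.fml G) z := by
  rintro (⟨A, N, -, hy, -⟩ | ⟨A, N, -, hy, -⟩ | ⟨N', N, -, hy, -⟩)
  · exact SeqElem.noConfusion hy
  · injection hy with hy; exact hG A hy
  · exact SeqElem.noConfusion hy

theorem InsTop_cons_inv {y f : SeqElem} {δ' T : Sequent} (h : InsTop y δ' (f :: T)) :
    (y = f ∧ δ' = T) ∨ (∃ δ'', δ' = f :: δ'' ∧ InsTop y δ'' T) := by
  cases h with
  | head => exact .inl ⟨rfl, rfl⟩
  | cons _ h' => exact .inr ⟨_, rfl, h'⟩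

/-! ### Admissibility of fusion -/

theorem fuse_adm : ∀ {n : ℕ} {Θ : Sequent}, DerivH n Θ → ∀ {Δ : Sequent},
    At LF Δ Θ → DerivH n Δ := by
  intro n Θ hd
  induction hd with
  | id n c a =>
    intro Δ hAt
    rcases hAt.fill_split with ⟨c', hu, hdep, rfl⟩ | ⟨s', hs, rfl⟩ |
      ⟨c₂, σ₂, Δ₀, hne, hfe, hdep, l, rfl⟩ | ⟨cP, Δl, c₁, Δ₀, hfe, l, rfl, hdP⟩
    · exact .id n c' a
    · obtain ⟨z, hR, rfl⟩ := atLP_fml_pair hs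
      exact absurd hR (RF_fml_nonbox (fun A h => by cases h))
    · rcases LP_M_refine hne l with ⟨Δb, rfl, hloc⟩ | ⟨x, y, z, σ₂', τ', rfl, hiS, hR, rfl⟩
      · obtain ⟨c', hu, hdep', heq⟩ := LP_localized_to_U hfe hdep hloc _
        rw [heq]; exact .id n c' a
      · rcases InsTop_pair hiS with ⟨rfl, -⟩ | ⟨rfl, -⟩
        · exact absurd hR (RF_fml_nonbox (fun A h => by cases h))
        · exact absurd hR (RF_fml_nonbox (fun A h => by cases h))
    · obtain ⟨cM, hdepM, hwit, heqv⟩ := LF_P_handler (cP := cP) l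
      exact (DerivH.id n cM a).eqv' heqv
  | @and k c A B p1 p2 ih1 ih2 =>
    intro Δ hAt
    rcases hAt.fill_split with ⟨c', hu, hdep, rfl⟩ | ⟨s', hs, rfl⟩ |
      ⟨c₂, σ₂, Δ₀, hne, hfe, hdep, l, rfl⟩ | ⟨cP, Δl, c₁, Δ₀, hfe, l, rfl, hdP⟩
    · exact .and (ih1 (hu _)) (ih2 (hu _))
    · exact (atLP_fml_single hs).elim
    · rcases LP_M_refine hne l with ⟨Δb, rfl, hloc⟩ | ⟨x, y, z, σ₂', τ', rfl, hiS, hR, rfl⟩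
      · obtain ⟨c', hu, hdep', heq⟩ := LP_localized_to_U hfe hdep hloc _
        rw [heq]; exact .and (ih1 (hu _)) (ih2 (hu _))
      · obtain ⟨rfl, -⟩ := InsTop_single hiS
        exact absurd hR (RF_fml_nonbox (fun A h => by cases h))
    · obtain ⟨cM, hdepM, hwit, heqv⟩ := LF_P_handler (cP := cP) l
      obtain ⟨W1, hw1, he1⟩ := hwit [.fml A]
      obtain ⟨W2, hw2, he2⟩ := hwit [.fml B]
      have d1 := (ih1 ((hfe [.fml A]) ▸ hw1)).eqv' he1
      have d2 := (ih2 ((hfe [.fml B]) ▸ hw2)).eqv' he2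
      exact (DerivH.and d1 d2).eqv' heqv
  | @or k c A B p ih =>
    intro Δ hAt
    rcases hAt.fill_split with ⟨c', hu, hdep, rfl⟩ | ⟨s', hs, rfl⟩ |
      ⟨c₂, σ₂, Δ₀, hne, hfe, hdep, l, rfl⟩ | ⟨cP, Δl, c₁, Δ₀, hfe, l, rfl, hdP⟩
    · exact .or (ih (hu _))
    · exact (atLP_fml_single hs).elim
    · rcases LP_M_refine hne l with ⟨Δb, rfl, hloc⟩ | ⟨x, y, z, σ₂', τ', rfl, hiS, hR, rfl⟩
      · obtain ⟨c', hu, hdep', heq⟩ := LP_localized_to_U hfe hdep hloc _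
        rw [heq]; exact .or (ih (hu _))
      · obtain ⟨rfl, -⟩ := InsTop_single hiS
        exact absurd hR (RF_fml_nonbox (fun A h => by cases h))
    · obtain ⟨cM, hdepM, hwit, heqv⟩ := LF_P_handler (cP := cP) l
      obtain ⟨W1, hw1, he1⟩ := hwit [.fml A, .fml B]
      have d1 := (ih ((hfe [.fml A, .fml B]) ▸ hw1)).eqv' he1
      exact (DerivH.or d1).eqv' heqv
  | @box k c A p ih =>
    intro Δ hAt
    rcases hAt.fill_split with ⟨c', hu, hdep, rfl⟩ | ⟨s', hs, rfl⟩ |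
      ⟨c₂, σ₂, Δ₀, hne, hfe, hdep, l, rfl⟩ | ⟨cP, Δl, c₁, Δ₀, hfe, l, rfl, hdP⟩
    · exact .box (ih (hu _))
    · exact (atLP_fml_single hs).elim
    · rcases LP_M_refine hne l with ⟨Δb, rfl, hloc⟩ | ⟨x, y, z, σ₂', τ', rfl, hiS, hR, rfl⟩
      · obtain ⟨c', hu, hdep', heq⟩ := LP_localized_to_U hfe hdep hloc _
        rw [heq]; exact .box (ih (hu _))
      · -- principal absorption: the box formula is absorbed into a context bracket
        obtain ⟨rfl, rfl⟩ := InsTop_single hiS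
        obtain ⟨N, rfl, rfl⟩ : ∃ N, x = SeqElem.nest N ∧ z = .nest (N ++ payload A) := by
          rcases hR with ⟨A', N, -, hy, -⟩ | ⟨A', N, rfl, hy, rfl⟩ | ⟨N', N, -, hy, -⟩
          · cases hy
          · injection hy with hy; injection hy with hy; subst hy; exact ⟨N, rfl, rfl⟩
          · cases hy
        have hw : At LF (c₂.fill (.nest (N ++ payload A) :: (σ₂' ++ [])))
            (c.fill [.nest (payload A)]) := by
          rw [hfe [.nest (payload A)]]
          refine At.fillCtx c₂ (At.here ?_)
          exact ⟨_, _, _, _, _, rfl, InsTop.mid (SeqElem.nest (payload A)) σ₂' [],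
            .inr (.inr ⟨N, payload A, rfl, rfl, rfl⟩), rfl⟩
        exact .up (ih hw)
    · obtain ⟨cM, hdepM, hwit, heqv⟩ := LF_P_handler (cP := cP) l
      obtain ⟨W1, hw1, he1⟩ := hwit [.nest [.fml (.dia A.negate), .fml A]]
      have d1 := (ih ((hfe _) ▸ hw1)).eqv' he1
      exact (DerivH.box d1).eqv' heqv
  | @dia k c d A hdep0 p ih =>
    intro Δ hAt
    rcases hAt.fill_split with ⟨c', hu, hdep, rfl⟩ | ⟨s', hs, rfl⟩ |
      ⟨c₂, σ₂, Δ₀, hne, hfe, hdep, l, rfl⟩ | ⟨cP, Δl, c₁, Δ₀, hfe, l, rfl, hdP⟩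
    · exact .dia c' d hdep0 (ih (hu _))
    · -- (S) : surgery inside `d.fill [] ++ [◇A]`
      rcases hs.append_split with ⟨Δ₂, h2, rfl⟩ | ⟨σ₁, σ₂, Δ₀, heq, hne, l, rfl⟩ | ⟨Δ₁g, hu, rfl⟩
      · exact (atLP_fml_single h2).elim
      · cases d with
        | hole Δ1 => simp [Ctx.depth] at hdep0
        | nest Δ₁ din =>
          simp only [Ctx.fill] at heq
          cases σ₁ with
          | nil =>
            simp only [List.nil_append] at heq
            subst heq
            obtain ⟨x, y, z, T, T', heq2, hIT, hR, rfl⟩ := l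
            injection heq2 with h1 h2
            subst h1
            subst h2
            rcases hIT.split with ⟨Δ₁', hi, rfl⟩ | ⟨τ'', hi2, rfl⟩
            · obtain ⟨g, rfl, hgR, hgE⟩ := RF_absorb_x hR
              obtain ⟨E, hEd, hE⟩ := hgE din
              have hw : At LF
                  (c.fill (.nest (g (din.fill [.fml A])) :: (Δ₁' ++ [.fml (.dia A)])))
                  (c.fill ((Ctx.nest Δ₁ din).fill [.fml A] ++ [.fml (.dia A)])) := by
                refine At.fillCtx c (At.here ?_)
                refine ⟨_, y, _, _, _, rfl, ?_, ?_, rfl⟩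
                · exact hi.appendR [.fml (.dia A)]
                · exact hgR _
              have d1 := ih hw
              have hDd : ∀ t, SeqEquiv
                  (c.fill ((Ctx.nest Δ₁' E).fill t ++ [.fml (.dia A)]))
                  (c.fill (.nest (g (din.fill t)) :: (Δ₁' ++ [.fml (.dia A)]))) := fun t =>
                c.fill_cong (SeqEquiv.consNest (hE t) (SeqEquiv.refl _))
              have d3 := DerivH.dia c (Ctx.nest Δ₁' E) (by simp [Ctx.depth])
                (d1.eqv' (hDd [.fml A]))
              exact d3.eqv (hDd [])
            · obtain ⟨rfl, -⟩ := InsTop_single hi2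
              exact absurd hR (RF_fml_nonbox (fun A h => by cases h))
          | cons e σ₁'' =>
            injection heq with h1 h2
            subst h1
            subst h2
            rcases LP_M_refine hne l with ⟨Δb, rfl, hloc⟩ | ⟨x, y, z, σ₂', τ', rfl, hiS, hR, rfl⟩
            · have hw : At LF
                  (c.fill (.nest (din.fill [.fml A]) :: (σ₁'' ++ (Δb ++ [.fml (.dia A)]))))
                  (c.fill ((Ctx.nest (σ₁'' ++ σ₂) din).fill [.fml A] ++ [.fml (.dia A)])) := by
                have hh : (Ctx.nest (σ₁'' ++ σ₂) din).fill [.fml A] ++ [SeqElem.fml (Formula.dia A)] =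
                    .nest (din.fill [.fml A]) :: (σ₁'' ++ (σ₂ ++ [.fml (.dia A)])) := by
                  simp [Ctx.fill]
                rw [hh]
                exact At.fillCtx c (At.cons _ (At.appendL σ₁'' (At.here (hloc [.fml (.dia A)]))))
              have d1 := ih hw
              have d2 : DerivH k
                  (c.fill ((Ctx.nest (σ₁'' ++ Δb) din).fill [.fml A] ++ [.fml (.dia A)])) := by
                have hh : (Ctx.nest (σ₁'' ++ Δb) din).fill [.fml A] ++ [SeqElem.fml (Formula.dia A)] =
                    .nest (din.fill [.fml A]) :: (σ₁'' ++ (Δb ++ [.fml (.dia A)])) := by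
                  simp [Ctx.fill]
                rw [hh]; exact d1
              have d3 := DerivH.dia c (Ctx.nest (σ₁'' ++ Δb) din) (by simp [Ctx.depth]) d2
              have hh : (Ctx.nest (σ₁'' ++ Δb) din).fill [] ++ [SeqElem.fml (Formula.dia A)] =
                  .nest (din.fill []) :: σ₁'' ++ (Δb ++ [.fml (.dia A)]) := by
                simp [Ctx.fill]
              rw [hh] at d3
              exact d3
            · obtain ⟨rfl, -⟩ := InsTop_single hiS
              exact absurd hR (RF_fml_nonbox (fun A h => by cases h))
      · -- (S-C)
        have h0 : At LF Δ₁g (d.fill []) := by simpa using hu []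
        rcases h0.fill_split with ⟨d', hu', hdep', rfl⟩ | ⟨s'', hs'', rfl⟩ |
          ⟨d₂, σ₂, Δ₀, hne, hfe2, hdepd, l, rfl⟩ | ⟨dP, Δl, d₁, Δ₀, hfeP, l, rfl, hdp⟩
        · exact .dia c d' (hdep' ▸ hdep0)
            (ih (At.fillCtx c ((hu' [.fml A]).appendR (fun τ l => LP.appendR τ l) [.fml (.dia A)])))
        · exact (at_nil (fun _ => LP_nil) hs'').elim
        · rcases LP_M_refine hne l with ⟨Δb, rfl, hloc⟩ | ⟨x, y, z, σ₂', τ', rfl, hiS, hR, rfl⟩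
          · obtain ⟨d', hu', hdep', heq⟩ := LP_localized_to_U hfe2 hdepd hloc []
            rw [heq]
            exact .dia c d' (hdep' ▸ hdep0)
              (ih (At.fillCtx c ((hu' [.fml A]).appendR (fun τ l => LP.appendR τ l) [.fml (.dia A)])))
          · cases hiS
        · obtain ⟨dM, hdepM, hwit, heqv⟩ := LF_P_handler (cP := dP) l
          obtain ⟨W, hw, he⟩ := hwit [.fml A]
          have hw2 : At LF (c.fill (W ++ [.fml (.dia A)]))
              (c.fill (d.fill [.fml A] ++ [.fml (.dia A)])) := by
            rw [hfeP [.fml A]]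
            exact At.fillCtx c (hw.appendR (fun τ l => LP.appendR τ l) [.fml (.dia A)])
          have d1 := ih hw2
          have d2 := d1.eqv' (c.fill_cong (SeqEquiv.appendR he [.fml (.dia A)]))
          have d3 := DerivH.dia c dM (by omega) d2
          exact d3.eqv' (c.fill_cong (SeqEquiv.appendR heqv [.fml (.dia A)]))
    · -- (M)
      rcases LP_M_refine hne l with ⟨Δb, rfl, hloc⟩ | ⟨x, y, z, σ₂', τ', rfl, hiS, hR, rfl⟩
      · obtain ⟨c', hu, hdep', heq⟩ := LP_localized_to_U hfe hdep hloc _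
        rw [heq]; exact .dia c' d hdep0 (ih (hu _))
      · rcases hiS.split with ⟨δ', hi1, rfl⟩ | ⟨τ'', hi2, rfl⟩
        · cases d with
          | hole Δ1 => simp [Ctx.depth] at hdep0
          | nest Δ₁ din =>
            rcases InsTop_cons_inv hi1 with ⟨rfl, rfl⟩ | ⟨Δ₁', rfl, hi1'⟩
            · obtain ⟨g, rfl, hgR, hgE⟩ := RF_absorb_y hR
              obtain ⟨E, hEd, hE⟩ := hgE din
              have hw : At LF
                  (c₂.fill (.nest (g (din.fill [.fml A])) :: (σ₂' ++ (δ' ++ [.fml (.dia A)]))))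
                  (c.fill ((Ctx.nest δ' din).fill [.fml A] ++ [.fml (.dia A)])) := by
                rw [hfe]
                refine At.fillCtx c₂ (At.here ?_)
                refine ⟨_, .nest (din.fill [.fml A]), _, _, _, rfl, ?_, ?_, rfl⟩
                · exact InsTop.appendL σ₂' (InsTop.head _)
                · exact hgR _
              have d1 := ih hw
              have hDd : ∀ t, SeqEquiv
                  (c₂.fill ((Ctx.nest (σ₂' ++ δ') E).fill t ++ [.fml (.dia A)]))
                  (c₂.fill (.nest (g (din.fill t)) :: (σ₂' ++ (δ' ++ [.fml (.dia A)])))) := by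
                intro t
                refine c₂.fill_cong ?_
                show SeqEquiv (SeqElem.nest (E.fill t) :: ((σ₂' ++ δ') ++ [.fml (.dia A)])) _
                rw [List.append_assoc]
                exact SeqEquiv.consNest (hE t) (SeqEquiv.refl _)
              have d3 := DerivH.dia c₂ (Ctx.nest (σ₂' ++ δ') E) (by simp [Ctx.depth])
                (d1.eqv' (hDd [.fml A]))
              exact d3.eqv (hDd [])
            · have hw : At LF
                  (c₂.fill (z :: (σ₂' ++ (.nest (din.fill [.fml A]) :: (Δ₁' ++ [.fml (.dia A)])))))
                  (c.fill ((Ctx.nest Δ₁ din).fill [.fml A] ++ [.fml (.dia A)])) := by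
                rw [hfe]
                refine At.fillCtx c₂ (At.here ?_)
                refine ⟨_, y, _, _, _, rfl, ?_, ?_, rfl⟩
                · exact InsTop.appendL σ₂' (InsTop.cons _ (hi1'.appendR [.fml (.dia A)]))
                · exact hR
              have d1 := ih hw
              have d2 : DerivH k
                  ((c₂.ext (z :: σ₂')).fill ((Ctx.nest Δ₁' din).fill [.fml A] ++ [.fml (.dia A)])) := by
                have hh : (c₂.ext (z :: σ₂')).fill ((Ctx.nest Δ₁' din).fill [.fml A] ++ [.fml (.dia A)]) =
                    c₂.fill (z :: (σ₂' ++ (.nest (din.fill [.fml A]) :: (Δ₁' ++ [.fml (.dia A)])))) := by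
                  simp [Ctx.fill]
                rw [hh]; exact d1
              have d3 := DerivH.dia (c₂.ext (z :: σ₂')) (Ctx.nest Δ₁' din) (by simp [Ctx.depth]) d2
              have hh : (c₂.ext (z :: σ₂')).fill ((Ctx.nest Δ₁' din).fill [] ++ [.fml (.dia A)]) =
                  c₂.fill (z :: (σ₂' ++ (.nest (din.fill []) :: (Δ₁' ++ [.fml (.dia A)])))) := by
                simp [Ctx.fill]
              rw [hh] at d3
              exact d3
        · obtain ⟨rfl, -⟩ := InsTop_single hi2
          exact absurd hR (RF_fml_nonbox (fun A h => by cases h))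
    · obtain ⟨cM, hdepM, hwit, heqv⟩ := LF_P_handler (cP := cP) l
      obtain ⟨W, hw, he⟩ := hwit (d.fill [.fml A] ++ [.fml (.dia A)])
      have d1 := (ih ((hfe _) ▸ hw)).eqv' he
      exact (DerivH.dia cM d hdep0 d1).eqv' heqv
  | exch h hsub ih =>
    intro Δ hAt
    obtain ⟨Δ', hA, hE⟩ := transfer_LP RF.hEEq RF.hSym h hAt
    exact .exch hE (ih hA)
  | up hsub ih =>
    intro Δ hAt
    exact .up (ih hAt)
theorem SeqEquiv.snoc_out (σ τ : Sequent) (e : SeqElem) :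
    SeqEquiv (σ ++ e :: τ) ((σ ++ τ) ++ [e]) := by
  refine (SeqEquiv.middle σ e τ).trans ?_
  have h := (SeqEquiv.middle (σ ++ τ) e []).symm
  simpa using h

theorem LC_not_nest {A : Formula} {Δ₀ N T} (l : LP (RC A) Δ₀ (.nest N :: T)) : False := by
  obtain ⟨x, y, z, T0, T', heq, -, hRC, -⟩ := l
  obtain ⟨rfl, -, -⟩ := hRC
  injection heq with h1 h2
  exact SeqElem.noConfusion h1

/-! ### Height-preserving admissibility of contraction -/

theorem ctr_adm : ∀ (n : ℕ) {Θ Δ : Sequent} {A : Formula}, DerivH n Θ →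
    At (LC A) Δ Θ → DerivH n Δ := by
  intro n
  induction n using Nat.strong_induction_on with
  | _ n IH =>
  intro Θ Δ A hd hAt
  suffices H : ∀ (m : ℕ) (Θ : Sequent), DerivH m Θ → m = n →
      ∀ (A : Formula) (Δ : Sequent), At (LC A) Δ Θ → DerivH m Δ from
    H n Θ hd rfl A Δ hAt
  clear hd hAt Θ Δ A
  intro m Θ hd
  induction hd with
  | @id m' c a =>
    intro hm A Δ hAt
    rcases hAt.fill_split with ⟨c', hu, hdep, rfl⟩ | ⟨s', hs, rfl⟩ |
      ⟨c₂, σ₂, Δ₀, hne, hfe, hdep, l, rfl⟩ | ⟨cP, Δl, c₁, Δ₀, hfe, l, rfl, hdP⟩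
    · exact .id m' c' a
    · obtain ⟨z, hR, rfl⟩ := atLP_fml_pair hs
      obtain ⟨h1, h2, -⟩ := hR
      injection h1.trans h2.symm with h3
      cases h3
    · rcases LP_M_refine hne l with ⟨Δb, rfl, hloc⟩ | ⟨x, y, z, σ₂', τ', rfl, hiS, hR, rfl⟩
      · obtain ⟨c', hu, hdep', heq⟩ := LP_localized_to_U hfe hdep hloc _
        rw [heq]; exact .id m' c' a
      · obtain ⟨rfl, rfl, rfl⟩ := hR
        rcases InsTop_pair hiS with ⟨hA, rfl⟩ | ⟨hA, rfl⟩
        · injection hA with hA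
          subst hA
          have h1 : DerivH m' (c₂.fill (σ₂' ++ [.fml (.pos a), .fml (.neg a)])) := by
            have := DerivH.id m' (c₂.ext σ₂') a
            rwa [Ctx.ext_fill] at this
          exact h1.eqv (c₂.fill_cong (SeqEquiv.middle σ₂' _ _))
        · injection hA with hA
          subst hA
          have h1 : DerivH m' (c₂.fill (σ₂' ++ [.fml (.pos a), .fml (.neg a)])) := by
            have := DerivH.id m' (c₂.ext σ₂') a
            rwa [Ctx.ext_fill] at this
          refine h1.eqv (c₂.fill_cong ?_)
          have e1 : SeqEquiv (σ₂' ++ [SeqElem.fml (Formula.pos a), SeqElem.fml (Formula.neg a)])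
              (.fml (.pos a) :: .fml (.neg a) :: (σ₂' ++ [])) := by
            refine (SeqEquiv.middle σ₂' _ _).trans (SeqEquiv.cons ?_)
            simpa using SeqEquiv.middle σ₂' (SeqElem.fml (Formula.neg a)) []
          refine e1.trans ?_
          refine (SeqEquiv.swap _ _ _).trans (SeqEquiv.cons ?_)
          simpa using SeqEquiv.middle' σ₂' (SeqElem.fml (Formula.pos a)) []
    · exact (LC_not_nest l).elim
  | @and k c A₁ B₁ p1 p2 ih1 ih2 =>
    intro hm A Δ hAt
    have hk : k < n := by omega
    rcases hAt.fill_split with ⟨c', hu, hdep, rfl⟩ | ⟨s', hs, rfl⟩ |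
      ⟨c₂, σ₂, Δ₀, hne, hfe, hdep, l, rfl⟩ | ⟨cP, Δl, c₁, Δ₀, hfe, l, rfl, hdP⟩
    · exact .and (IH k hk p1 (hu _)) (IH k hk p2 (hu _))
    · exact (atLP_fml_single hs).elim
    · rcases LP_M_refine hne l with ⟨Δb, rfl, hloc⟩ | ⟨x, y, z, σ₂', τ', rfl, hiS, hR, rfl⟩
      · obtain ⟨c', hu, hdep', heq⟩ := LP_localized_to_U hfe hdep hloc _
        rw [heq]; exact .and (IH k hk p1 (hu _)) (IH k hk p2 (hu _))
      · obtain ⟨rfl, rfl, rfl⟩ := hR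
        obtain ⟨hA, rfl⟩ := InsTop_single hiS
        injection hA with hA
        subst hA
        -- principal contraction for ∧
        rw [hfe [.fml A₁]] at p1
        rw [hfe [.fml B₁]] at p2
        have hwq1 : At (LR (.and A₁ B₁) [.fml A₁])
            (c₂.fill ([.fml A₁] ++ (σ₂' ++ [.fml A₁])))
            (c₂.fill (.fml (.and A₁ B₁) :: (σ₂' ++ [.fml A₁]))) :=
          At.fillCtx c₂ (At.here ⟨σ₂' ++ [.fml A₁], rfl, rfl⟩)
        have hwq2 : At (LR (.and A₁ B₁) [.fml B₁])
            (c₂.fill ([.fml B₁] ++ (σ₂' ++ [.fml B₁])))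
            (c₂.fill (.fml (.and A₁ B₁) :: (σ₂' ++ [.fml B₁]))) :=
          At.fillCtx c₂ (At.here ⟨σ₂' ++ [.fml B₁], rfl, rfl⟩)
        have q1 : DerivH k (c₂.fill (.fml A₁ :: (σ₂' ++ [.fml A₁]))) :=
          inv_and_left p1 hwq1
        have q2 : DerivH k (c₂.fill (.fml B₁ :: (σ₂' ++ [.fml B₁]))) :=
          inv_and_right p2 hwq2
        have r1 : DerivH k (c₂.fill (.fml A₁ :: (σ₂' ++ []))) := by
          refine IH k hk (A := A₁) q1 (At.fillCtx c₂ (At.here ?_))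
          exact ⟨.fml A₁, .fml A₁, .fml A₁, σ₂' ++ [.fml A₁], σ₂' ++ [], rfl,
            InsTop.mid _ σ₂' [], ⟨rfl, rfl, rfl⟩, rfl⟩
        have r2 : DerivH k (c₂.fill (.fml B₁ :: (σ₂' ++ []))) := by
          refine IH k hk (A := B₁) q2 (At.fillCtx c₂ (At.here ?_))
          exact ⟨.fml B₁, .fml B₁, .fml B₁, σ₂' ++ [.fml B₁], σ₂' ++ [], rfl,
            InsTop.mid _ σ₂' [], ⟨rfl, rfl, rfl⟩, rfl⟩
        have r1' : DerivH k ((c₂.ext σ₂').fill [.fml A₁]) := by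
          rw [Ctx.ext_fill]
          exact r1.eqv (c₂.fill_cong (SeqEquiv.middle' σ₂' (SeqElem.fml A₁) []))
        have r2' : DerivH k ((c₂.ext σ₂').fill [.fml B₁]) := by
          rw [Ctx.ext_fill]
          exact r2.eqv (c₂.fill_cong (SeqEquiv.middle' σ₂' (SeqElem.fml B₁) []))
        have d := DerivH.and r1' r2'
        rw [Ctx.ext_fill] at d
        exact d.eqv (c₂.fill_cong (SeqEquiv.middle σ₂' (SeqElem.fml (A₁.and B₁)) []))
    · exact (LC_not_nest l).elim
  | @or k c A₁ B₁ p ih =>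
    intro hm A Δ hAt
    have hk : k < n := by omega
    rcases hAt.fill_split with ⟨c', hu, hdep, rfl⟩ | ⟨s', hs, rfl⟩ |
      ⟨c₂, σ₂, Δ₀, hne, hfe, hdep, l, rfl⟩ | ⟨cP, Δl, c₁, Δ₀, hfe, l, rfl, hdP⟩
    · exact .or (IH k hk p (hu _))
    · exact (atLP_fml_single hs).elim
    · rcases LP_M_refine hne l with ⟨Δb, rfl, hloc⟩ | ⟨x, y, z, σ₂', τ', rfl, hiS, hR, rfl⟩
      · obtain ⟨c', hu, hdep', heq⟩ := LP_localized_to_U hfe hdep hloc _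
        rw [heq]; exact .or (IH k hk p (hu _))
      · obtain ⟨rfl, rfl, rfl⟩ := hR
        obtain ⟨hA, rfl⟩ := InsTop_single hiS
        injection hA with hA
        subst hA
        rw [hfe [.fml A₁, .fml B₁]] at p
        have hwq : At (LR (.or A₁ B₁) [.fml A₁, .fml B₁])
            (c₂.fill ([.fml A₁, .fml B₁] ++ (σ₂' ++ [.fml A₁, .fml B₁])))
            (c₂.fill (.fml (.or A₁ B₁) :: (σ₂' ++ [.fml A₁, .fml B₁]))) :=
          At.fillCtx c₂ (At.here ⟨σ₂' ++ [.fml A₁, .fml B₁], rfl, rfl⟩)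
        have q : DerivH k (c₂.fill (.fml A₁ :: .fml B₁ :: (σ₂' ++ [.fml A₁, .fml B₁]))) :=
          inv_or p hwq
        have r1 : DerivH k (c₂.fill (.fml A₁ :: .fml B₁ :: (σ₂' ++ [.fml B₁]))) := by
          refine IH k hk (A := A₁) q (At.fillCtx c₂ (At.here ?_))
          exact ⟨.fml A₁, .fml A₁, .fml A₁, .fml B₁ :: (σ₂' ++ [.fml A₁, .fml B₁]),
            .fml B₁ :: (σ₂' ++ [.fml B₁]), rfl,
            InsTop.cons _ (InsTop.appendL σ₂' (InsTop.head _)), ⟨rfl, rfl, rfl⟩, rfl⟩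
        have r2 : DerivH k (c₂.fill (.fml A₁ :: .fml B₁ :: (σ₂' ++ []))) := by
          refine IH k hk (A := B₁) r1 (At.fillCtx c₂ (At.cons _ (At.here ?_)))
          exact ⟨.fml B₁, .fml B₁, .fml B₁, σ₂' ++ [.fml B₁], σ₂' ++ [], rfl,
            InsTop.mid _ σ₂' [], ⟨rfl, rfl, rfl⟩, rfl⟩
        have s1 : SeqEquiv (SeqElem.fml B₁ :: (σ₂' ++ [])) (σ₂' ++ [SeqElem.fml B₁]) :=
          SeqEquiv.middle' σ₂' (SeqElem.fml B₁) []
        have s2 : SeqEquiv (SeqElem.fml A₁ :: (σ₂' ++ [SeqElem.fml B₁]))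
            (σ₂' ++ [SeqElem.fml A₁, SeqElem.fml B₁]) :=
          SeqEquiv.middle' σ₂' (SeqElem.fml A₁) [SeqElem.fml B₁]
        have r' : DerivH k ((c₂.ext σ₂').fill [.fml A₁, .fml B₁]) := by
          rw [Ctx.ext_fill]
          exact r2.eqv (c₂.fill_cong ((SeqEquiv.cons s1).trans s2))
        have d := DerivH.or r'
        rw [Ctx.ext_fill] at d
        exact d.eqv (c₂.fill_cong (SeqEquiv.middle σ₂' (SeqElem.fml (A₁.or B₁)) []))
    · exact (LC_not_nest l).elim
  | @box k c A₁ p ih =>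
    intro hm A Δ hAt
    have hk : k < n := by omega
    rcases hAt.fill_split with ⟨c', hu, hdep, rfl⟩ | ⟨s', hs, rfl⟩ |
      ⟨c₂, σ₂, Δ₀, hne, hfe, hdep, l, rfl⟩ | ⟨cP, Δl, c₁, Δ₀, hfe, l, rfl, hdP⟩
    · exact .box (IH k hk p (hu _))
    · exact (atLP_fml_single hs).elim
    · rcases LP_M_refine hne l with ⟨Δb, rfl, hloc⟩ | ⟨x, y, z, σ₂', τ', rfl, hiS, hR, rfl⟩
      · obtain ⟨c', hu, hdep', heq⟩ := LP_localized_to_U hfe hdep hloc _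
        rw [heq]; exact .box (IH k hk p (hu _))
      · obtain ⟨rfl, rfl, rfl⟩ := hR
        obtain ⟨hA, rfl⟩ := InsTop_single hiS
        injection hA with hA
        subst hA
        -- principal contraction for □ : fuse the context copy with the new bracket
        have p' : DerivH k (c₂.fill (.fml A₁.box :: σ₂' ++ [.nest (payload A₁)])) := by
          rw [← hfe]; exact p
        have q : DerivH k (c₂.fill (.nest (payload A₁ ++ payload A₁) :: (σ₂' ++ []))) := by
          refine fuse_adm p' (At.fillCtx c₂ (At.here ?_))
          refine ⟨_, .nest (payload A₁), _, _, _, rfl, ?_, ?_, rfl⟩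
          · exact InsTop.mid _ σ₂' []
          · exact .inl ⟨A₁, payload A₁, rfl, rfl, rfl⟩
        have r1 : DerivH k (c₂.fill (.nest
            (.fml (.dia A₁.negate) :: [.fml A₁, .fml A₁]) :: (σ₂' ++ []))) := by
          refine IH k hk (A := .dia A₁.negate) q (At.fillCtx c₂ (At.nest _ (At.here ?_)))
          exact ⟨.fml (.dia A₁.negate), .fml (.dia A₁.negate), .fml (.dia A₁.negate),
            [.fml A₁, .fml (.dia A₁.negate), .fml A₁], [.fml A₁, .fml A₁], rfl,
            InsTop.cons _ (InsTop.head _), ⟨rfl, rfl, rfl⟩, rfl⟩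
        have r2 : DerivH k (c₂.fill (.nest [.fml (.dia A₁.negate), .fml A₁] :: (σ₂' ++ []))) := by
          refine IH k hk (A := A₁) r1 (At.fillCtx c₂ (At.nest _ (At.cons _ (At.here ?_))))
          exact ⟨.fml A₁, .fml A₁, .fml A₁, [.fml A₁], [], rfl,
            InsTop.head _, ⟨rfl, rfl, rfl⟩, rfl⟩
        have r' : DerivH k ((c₂.ext σ₂').fill [.nest [.fml (.dia A₁.negate), .fml A₁]]) := by
          rw [Ctx.ext_fill]
          exact r2.eqv (c₂.fill_cong
            (SeqEquiv.middle' σ₂' (SeqElem.nest [.fml (.dia A₁.negate), .fml A₁]) []))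
        have d := DerivH.box r'
        rw [Ctx.ext_fill] at d
        exact d.eqv (c₂.fill_cong (SeqEquiv.middle σ₂' (SeqElem.fml A₁.box) []))
    · exact (LC_not_nest l).elim
  | @dia k c d A₁ hdep0 p ih =>
    intro hm A Δ hAt
    have hk : k < n := by omega
    rcases hAt.fill_split with ⟨c', hu, hdep, rfl⟩ | ⟨s', hs, rfl⟩ |
      ⟨c₂, σ₂, Δ₀, hne, hfe, hdep, l, rfl⟩ | ⟨cP, Δl, c₁, Δ₀, hfe, l, rfl, hdP⟩
    · exact .dia c' d hdep0 (IH k hk p (hu _))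
    · -- (S)
      rcases hs.append_split with ⟨Δ₂, h2, rfl⟩ | ⟨σ₁, σ₂, Δ₀, heq, hne, l, rfl⟩ | ⟨Δ₁g, hu, rfl⟩
      · exact (atLP_fml_single h2).elim
      · cases d with
        | hole Δ1 => simp [Ctx.depth] at hdep0
        | nest Δ₁ din =>
          simp only [Ctx.fill] at heq
          cases σ₁ with
          | nil =>
            simp only [List.nil_append] at heq
            subst heq
            obtain ⟨x, y, z, T, T', heq2, hIT, hRC, rfl⟩ := l
            obtain ⟨rfl, -, -⟩ := hRC
            injection heq2 with h1 h2
            exact SeqElem.noConfusion h1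
          | cons e σ₁'' =>
            injection heq with h1 h2
            subst h1
            subst h2
            rcases LP_M_refine hne l with ⟨Δb, rfl, hloc⟩ | ⟨x, y, z, σ₂', τ', rfl, hiS, hR, rfl⟩
            · have hw : At (LC A)
                  (c.fill (.nest (din.fill [.fml A₁]) :: (σ₁'' ++ (Δb ++ [.fml (.dia A₁)]))))
                  (c.fill ((Ctx.nest (σ₁'' ++ σ₂) din).fill [.fml A₁] ++ [.fml (.dia A₁)])) := by
                have hh : (Ctx.nest (σ₁'' ++ σ₂) din).fill [.fml A₁] ++ [SeqElem.fml (Formula.dia A₁)] =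
                    .nest (din.fill [.fml A₁]) :: (σ₁'' ++ (σ₂ ++ [.fml (.dia A₁)])) := by
                  simp [Ctx.fill]
                rw [hh]
                exact At.fillCtx c (At.cons _ (At.appendL σ₁'' (At.here (hloc [.fml (.dia A₁)]))))
              have d1 := IH k hk p hw
              have d2 : DerivH k
                  (c.fill ((Ctx.nest (σ₁'' ++ Δb) din).fill [.fml A₁] ++ [.fml (.dia A₁)])) := by
                have hh : (Ctx.nest (σ₁'' ++ Δb) din).fill [.fml A₁] ++ [SeqElem.fml (Formula.dia A₁)] =
                    .nest (din.fill [.fml A₁]) :: (σ₁'' ++ (Δb ++ [.fml (.dia A₁)])) := by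
                  simp [Ctx.fill]
                rw [hh]; exact d1
              have d3 := DerivH.dia c (Ctx.nest (σ₁'' ++ Δb) din) (by simp [Ctx.depth]) d2
              have hh : (Ctx.nest (σ₁'' ++ Δb) din).fill [] ++ [SeqElem.fml (Formula.dia A₁)] =
                  .nest (din.fill []) :: σ₁'' ++ (Δb ++ [.fml (.dia A₁)]) := by
                simp [Ctx.fill]
              rw [hh] at d3
              exact d3
            · obtain ⟨rfl, rfl, rfl⟩ := hR
              obtain ⟨hA, rfl⟩ := InsTop_single hiS
              injection hA with hA
              subst hA
              -- principal ◇ with the retained copy among the siblings of `d`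
              have e3 : ∀ N : Sequent, SeqEquiv
                  (SeqElem.nest N :: (σ₁'' ++ (.fml (.dia A₁) :: (σ₂' ++ []))))
                  (SeqElem.nest N :: ((σ₁'' ++ σ₂') ++ [.fml (.dia A₁)])) := fun N =>
                SeqEquiv.cons (by simpa using SeqEquiv.snoc_out σ₁'' σ₂' (.fml (.dia A₁)))
              have hw : At (LC (.dia A₁))
                  (c.fill (.nest (din.fill [.fml A₁]) :: (σ₁'' ++ (.fml (.dia A₁) :: (σ₂' ++ [])))))
                  (c.fill ((Ctx.nest (σ₁'' ++ (.fml (.dia A₁) :: σ₂')) din).fill [.fml A₁]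
                    ++ [.fml (.dia A₁)])) := by
                have hh : (Ctx.nest (σ₁'' ++ (.fml (.dia A₁) :: σ₂')) din).fill [.fml A₁]
                    ++ [SeqElem.fml (Formula.dia A₁)] =
                    .nest (din.fill [.fml A₁]) :: (σ₁'' ++ (.fml (.dia A₁) :: (σ₂' ++ [.fml (.dia A₁)]))) := by
                  simp [Ctx.fill]
                rw [hh]
                refine At.fillCtx c (At.cons _ (At.appendL σ₁'' (At.here ?_)))
                exact ⟨.fml (.dia A₁), .fml (.dia A₁), .fml (.dia A₁), σ₂' ++ [.fml (.dia A₁)],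
                  σ₂' ++ [], rfl, InsTop.mid _ σ₂' [], ⟨rfl, rfl, rfl⟩, rfl⟩
              have r := IH k hk p hw
              have r2 := r.eqv (c.fill_cong (e3 (din.fill [.fml A₁])))
              have d3 := DerivH.dia c (Ctx.nest (σ₁'' ++ σ₂') din) (by simp [Ctx.depth]) r2
              exact d3.eqv' (c.fill_cong (e3 (din.fill [])))
      · -- (S-C)
        have h0 : At (LC A) Δ₁g (d.fill []) := by simpa using hu []
        rcases h0.fill_split with ⟨d', hu', hdep', rfl⟩ | ⟨s'', hs'', rfl⟩ |
          ⟨d₂, σ₂, Δ₀, hne, hfe2, hdepd, l, rfl⟩ | ⟨dP, Δl, d₁, Δ₀, hfeP, l, rfl, hdp⟩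
        · exact .dia c d' (hdep' ▸ hdep0)
            (IH k hk p (At.fillCtx c ((hu' [.fml A₁]).appendR
              (fun τ l => LP.appendR τ l) [.fml (.dia A₁)])))
        · exact (at_nil (fun _ => LP_nil) hs'').elim
        · rcases LP_M_refine hne l with ⟨Δb, rfl, hloc⟩ | ⟨x, y, z, σ₂', τ', rfl, hiS, hR, rfl⟩
          · obtain ⟨d', hu', hdep', heq⟩ := LP_localized_to_U hfe2 hdepd hloc []
            rw [heq]
            exact .dia c d' (hdep' ▸ hdep0)
              (IH k hk p (At.fillCtx c ((hu' [.fml A₁]).appendR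
                (fun τ l => LP.appendR τ l) [.fml (.dia A₁)])))
          · cases hiS
        · exact (LC_not_nest l).elim
    · -- (M)
      rcases LP_M_refine hne l with ⟨Δb, rfl, hloc⟩ | ⟨x, y, z, σ₂', τ', rfl, hiS, hR, rfl⟩
      · obtain ⟨c', hu, hdep', heq⟩ := LP_localized_to_U hfe hdep hloc _
        rw [heq]; exact .dia c' d hdep0 (IH k hk p (hu _))
      · obtain ⟨rfl, rfl, rfl⟩ := hR
        rcases hiS.split with ⟨δ', hi1, rfl⟩ | ⟨τ'', hi2, rfl⟩
        · cases d with
          | hole Δ1 => simp [Ctx.depth] at hdep0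
          | nest Δ₁ din =>
            rcases InsTop_cons_inv hi1 with ⟨hne2, rfl⟩ | ⟨Δ₁', rfl, hi1'⟩
            · cases hne2
            · have hw : At (LC A)
                  (c₂.fill (.fml A :: (σ₂' ++ (.nest (din.fill [.fml A₁]) :: (Δ₁' ++ [.fml (.dia A₁)])))))
                  (c.fill ((Ctx.nest Δ₁ din).fill [.fml A₁] ++ [.fml (.dia A₁)])) := by
                rw [hfe]
                refine At.fillCtx c₂ (At.here ?_)
                refine ⟨_, .fml A, _, _, _, rfl, ?_, ?_, rfl⟩
                · exact InsTop.appendL σ₂' (InsTop.cons _ (hi1'.appendR [.fml (.dia A₁)]))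
                · exact ⟨rfl, rfl, rfl⟩
              have d1 := IH k hk p hw
              have d2 : DerivH k
                  ((c₂.ext (.fml A :: σ₂')).fill ((Ctx.nest Δ₁' din).fill [.fml A₁] ++ [.fml (.dia A₁)])) := by
                have hh : (c₂.ext (.fml A :: σ₂')).fill ((Ctx.nest Δ₁' din).fill [.fml A₁] ++ [.fml (.dia A₁)]) =
                    c₂.fill (.fml A :: (σ₂' ++ (.nest (din.fill [.fml A₁]) :: (Δ₁' ++ [.fml (.dia A₁)])))) := by
                  simp [Ctx.fill]
                rw [hh]; exact d1
              have d3 := DerivH.dia (c₂.ext (.fml A :: σ₂')) (Ctx.nest Δ₁' din) (by simp [Ctx.depth]) d2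
              have hh : (c₂.ext (.fml A :: σ₂')).fill ((Ctx.nest Δ₁' din).fill [] ++ [.fml (.dia A₁)]) =
                  c₂.fill (.fml A :: (σ₂' ++ (.nest (din.fill []) :: (Δ₁' ++ [.fml (.dia A₁)])))) := by
                simp [Ctx.fill]
              rw [hh] at d3
              exact d3
        · obtain ⟨hA, rfl⟩ := InsTop_single hi2
          injection hA with hA
          subst hA
          -- principal ◇ with the retained copy in the outer context
          have e4 : ∀ X : Sequent, SeqEquiv
              (SeqElem.fml (Formula.dia A₁) :: (σ₂' ++ (X ++ [])))
              (σ₂' ++ (X ++ [.fml (.dia A₁)])) := fun X => by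
            simpa using SeqEquiv.middle' (σ₂' ++ X) (SeqElem.fml (Formula.dia A₁)) []
          have hw : At (LC (.dia A₁))
              (c₂.fill (.fml (.dia A₁) :: (σ₂' ++ (d.fill [.fml A₁] ++ []))))
              (c.fill (d.fill [.fml A₁] ++ [.fml (.dia A₁)])) := by
            rw [hfe]
            refine At.fillCtx c₂ (At.here ?_)
            refine ⟨_, .fml (.dia A₁), _, _, _, rfl, ?_, ?_, rfl⟩
            · exact InsTop.appendL σ₂' (InsTop.mid _ (d.fill [.fml A₁]) [])
            · exact ⟨rfl, rfl, rfl⟩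
          have r := IH k hk p hw
          have r3 : DerivH k ((c₂.ext σ₂').fill (d.fill [.fml A₁] ++ [.fml (.dia A₁)])) := by
            rw [Ctx.ext_fill]
            exact r.eqv (c₂.fill_cong (e4 (d.fill [.fml A₁])))
          have d3 := DerivH.dia (c₂.ext σ₂') d hdep0 r3
          rw [Ctx.ext_fill] at d3
          exact d3.eqv' (c₂.fill_cong (e4 (d.fill [])))
    · exact (LC_not_nest l).elim
  | @exch m' Γ₀ Θ₀ h hsub ih =>
    intro hm A Δ hAt
    obtain ⟨Δ', hA, hE⟩ := transfer_LP RC.hEEq RC.hSym h hAt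
    exact .exch hE (ih hm A Δ' hA)
  | @up m' Γ₀ hsub ih =>
    intro hm A Δ hAt
    exact .up (IH m' (by omega) hsub hAt)
/-- contraction is height-preserving admissible. -/
theorem contraction_admissible (h : ℕ) (c : Ctx) (A : Formula)
    (hd : DerivH h (c.fill [.fml A, .fml A])) :
    DerivH h (c.fill [.fml A]) := by
  refine ctr_adm h (A := A) hd (At.fillCtx c (At.here ?_))
  exact ⟨.fml A, .fml A, .fml A, [.fml A], [], rfl, InsTop.head [], ⟨rfl, rfl, rfl⟩, rfl⟩
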